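/- arXiv:1608.06094 — 6 statements merged into one kernel-verified Lean document; each statement's English description precedes it below -/
import Mathlib

section
/- Let D = (D₁,...,D_m) be an m-tuple of n×n real diagonal matrices (viewed as Hermitian matrices), let L : (H_n)^m → ℝ³ be a linear map, and let U ∈ U_n be unitary. Then the set E_L(D,U) := { L(U*T*_{θ,φ} D₁ T_{θ,φ} U, ..., U*T*_{θ,φ} D_m T_{θ,φ} U) : θ ∈ [0,π], φ ∈ [0,2π] } is the image of the unit sphere S² = {x ∈ ℝ³ : ‖x‖ = 1} under some affine map from ℝ³ to ℝ³ (i.e., E_L(D,U) is an ellipsoid, possibly degenerate). -/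
/-!
Conjugating a real diagonal matrix by `T_{θ,φ}` only changes its leading 2×2 block, whose entries
are quadratic in `cos θ` and `sin θ · e^{iφ}`. By the double-angle formulas they are therefore affine
functions of `(sin 2θ cos φ, sin 2θ sin φ, cos 2θ)`, the point of `S²` with spherical coordinates
`(2θ, φ)`, and this point sweeps out all of `S²` as `(θ, φ)` ranges over `[0, π] × [0, 2π]`.
Conjugating by `U` and applying `L` are real-linear, so the dependence stays affine.
-/

open Matrix

/-- The unitary matrix `T_{θ,φ}` whose leading 2×2 block is
`[[cos θ, sin θ · e^{iφ}], [−sin θ, cos θ · e^{iφ}]]` and which is the identity elsewhere. -/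
noncomputable def Tmat (n : ℕ) (θ φ : ℝ) : Matrix (Fin n) (Fin n) ℂ :=
  Matrix.of fun i j =>
    if (i : ℕ) = 0 ∧ (j : ℕ) = 0 then (Real.cos θ : ℂ)
    else if (i : ℕ) = 0 ∧ (j : ℕ) = 1 then (Real.sin θ : ℂ) * Complex.exp (Complex.I * φ)
    else if (i : ℕ) = 1 ∧ (j : ℕ) = 0 then -(Real.sin θ : ℂ)
    else if (i : ℕ) = 1 ∧ (j : ℕ) = 1 then (Real.cos θ : ℂ) * Complex.exp (Complex.I * φ)
    else if i = j then 1 else 0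

/-- The set `E_L(D,U) = { L(U*T*_{θ,φ}D₁T_{θ,φ}U, ..., U*T*_{θ,φ}D_mT_{θ,φ}U) :
θ ∈ [0,π], φ ∈ [0,2π] }`. -/
noncomputable def Eset {n m : ℕ}
    (L : (Fin m → Matrix (Fin n) (Fin n) ℂ) →ₗ[ℝ] (Fin 3 → ℝ))
    (D : Fin m → Matrix (Fin n) (Fin n) ℂ)
    (U : Matrix (Fin n) (Fin n) ℂ) : Set (Fin 3 → ℝ) :=
  {y | ∃ θ ∈ Set.Icc (0 : ℝ) Real.pi, ∃ φ ∈ Set.Icc (0 : ℝ) (2 * Real.pi),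
    y = L fun i => Uᴴ * (Tmat n θ φ)ᴴ * D i * Tmat n θ φ * U}

open Real

noncomputable section

def sphericalPoint (θ φ : ℝ) : EuclideanSpace ℝ (Fin 3) :=
  !₂[sin θ * cos φ, sin θ * sin φ, cos θ]

lemma sphericalPoint_mem_sphere (θ φ : ℝ) :
    sphericalPoint θ φ ∈ Metric.sphere (0 : EuclideanSpace ℝ (Fin 3)) 1 := by
  rw [mem_sphere_zero_iff_norm, EuclideanSpace.norm_eq, Real.sqrt_eq_one]
  simp only [sphericalPoint, Fin.sum_univ_three, Real.norm_eq_abs, sq_abs, PiLp.toLp_apply,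
    Matrix.cons_val_zero, Matrix.cons_val_one, Matrix.cons_val_two, Matrix.head_cons,
    Matrix.tail_cons]
  linear_combination sin θ ^ 2 * sin_sq_add_cos_sq φ + sin_sq_add_cos_sq θ

lemma exists_sphericalPoint_eq {v : EuclideanSpace ℝ (Fin 3)}
    (hv : v ∈ Metric.sphere (0 : EuclideanSpace ℝ (Fin 3)) 1) :
    ∃ θ ∈ Set.Icc 0 π, ∃ φ ∈ Set.Icc 0 (2 * π), sphericalPoint θ φ = v := by
  have hv : v 0 ^ 2 + v 1 ^ 2 + v 2 ^ 2 = 1 := by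
    rw [mem_sphere_zero_iff_norm, EuclideanSpace.norm_eq, Real.sqrt_eq_one] at hv
    simpa [Fin.sum_univ_three] using hv
  set w : ℂ := ⟨-v 0, -v 1⟩
  have hw : ‖w‖ = sin (arccos (v 2)) := by
    rw [sin_arccos, Complex.norm_def, Complex.normSq_apply]
    congr 1
    simp only [w]
    linear_combination hv
  -- `w` is minus the horizontal part of `v`, so `arg w + π ∈ (0, 2π]` is an azimuth of `v`
  refine ⟨arccos (v 2), ⟨arccos_nonneg _, arccos_le_pi _⟩, Complex.arg w + π, ?_, ?_⟩
  · have := Complex.arg_mem_Ioc w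
    constructor <;> linarith [this.1, this.2]
  · ext i
    fin_cases i
    · simp [sphericalPoint, ← hw, cos_add_pi, Complex.norm_mul_cos_arg, w]
    · simp [sphericalPoint, ← hw, sin_add_pi, Complex.norm_mul_sin_arg, w]
    · simp [sphericalPoint, cos_arccos (by nlinarith : -1 ≤ v 2) (by nlinarith : v 2 ≤ 1)]

section IsSphericalAffine

variable {M N : Type*} [AddCommGroup M] [Module ℝ M] [AddCommGroup N] [Module ℝ N]

def IsSphericalAffine (F : ℝ → ℝ → M) : Prop :=
  ∃ f : EuclideanSpace ℝ (Fin 3) →ᵃ[ℝ] M, ∀ θ φ, F θ φ = f (sphericalPoint (2 * θ) φ)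

namespace IsSphericalAffine

lemma const (c : M) : IsSphericalAffine fun _ _ => c :=
  ⟨AffineMap.const ℝ _ c, fun _ _ => rfl⟩

lemma of_coord {F : ℝ → ℝ → M} (c : M) (a : Fin 3 → M)
    (hF : ∀ θ φ, F θ φ = c + ∑ i, sphericalPoint (2 * θ) φ i • a i) :
    IsSphericalAffine F := by
  refine ⟨(∑ i, (EuclideanSpace.projₗ i).smulRight (a i)).toAffineMap + AffineMap.const ℝ _ c,
    fun θ φ => ?_⟩
  simp [hF, add_comm]

lemma add {F G : ℝ → ℝ → M} (hF : IsSphericalAffine F) (hG : IsSphericalAffine G) :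
    IsSphericalAffine fun θ φ => F θ φ + G θ φ := by
  obtain ⟨f, hf⟩ := hF
  obtain ⟨g, hg⟩ := hG
  exact ⟨f + g, fun θ φ => by simp [hf, hg]⟩

lemma sum {ι : Type*} (s : Finset ι) {F : ι → ℝ → ℝ → M}
    (hF : ∀ i ∈ s, IsSphericalAffine (F i)) :
    IsSphericalAffine fun θ φ => ∑ i ∈ s, F i θ φ := by
  induction s using Finset.cons_induction with
  | empty => simpa using const (0 : M)
  | cons i s _ ih =>
    simp only [Finset.sum_cons]
    exact (hF i (s.mem_cons_self i)).add (ih fun j hj => hF j (Finset.mem_cons_of_mem hj))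

lemma map {F : ℝ → ℝ → M} (hF : IsSphericalAffine F) (g : M →ₗ[ℝ] N) :
    IsSphericalAffine fun θ φ => g (F θ φ) := by
  obtain ⟨f, hf⟩ := hF
  exact ⟨g.toAffineMap.comp f, fun θ φ => by simp [hf]⟩

lemma smul {F : ℝ → ℝ → M} (hF : IsSphericalAffine F) (c : ℝ) :
    IsSphericalAffine fun θ φ => c • F θ φ :=
  hF.map (c • LinearMap.id)

lemma pi {ι : Type*} {M : ι → Type*} [∀ i, AddCommGroup (M i)] [∀ i, Module ℝ (M i)]
    {F : ℝ → ℝ → (i : ι) → M i} (hF : ∀ i, IsSphericalAffine fun θ φ => F θ φ i) :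
    IsSphericalAffine F := by
  choose f hf using hF
  exact ⟨AffineMap.pi f, fun θ φ => funext fun i => hf i θ φ⟩

lemma comp_add_pi_div_two {F : ℝ → ℝ → M} (hF : IsSphericalAffine F) :
    IsSphericalAffine fun θ φ => F (θ + π / 2) φ := by
  obtain ⟨f, hf⟩ := hF
  have hneg (θ φ : ℝ) : sphericalPoint (2 * (θ + π / 2)) φ = -sphericalPoint (2 * θ) φ := by
    ext i
    fin_cases i <;> simp [sphericalPoint, mul_add, mul_div_cancel₀, sin_add_pi, cos_add_pi]
  exact ⟨f.comp (-LinearMap.id).toAffineMap, fun θ φ => by simp [hf, hneg]⟩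

end IsSphericalAffine

end IsSphericalAffine

def tmatRow (n : ℕ) (θ φ : ℝ) (p : Fin n) : ℂ :=
  if (p : ℕ) = 0 then (cos θ : ℂ) else if (p : ℕ) = 1 then (sin θ : ℂ) * Complex.exp (Complex.I * φ)
  else 0

lemma isSphericalAffine_star_tmatRow_mul_tmatRow {n : ℕ} (p q : Fin n) :
    IsSphericalAffine fun θ φ => star (tmatRow n θ φ p) * tmatRow n θ φ q := by
  have hcoord (θ φ : ℝ) (a b c : ℂ) : ∑ i, sphericalPoint (2 * θ) φ i • ![a, b, c] i =
      2 * sin θ * cos θ * cos φ * a + 2 * sin θ * cos θ * sin φ * b + (2 * cos θ ^ 2 - 1) * c := by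
    simp [Fin.sum_univ_three, sphericalPoint, Complex.real_smul, sin_two_mul, cos_two_mul]
  have hstar (θ φ : ℝ) : star ((sin θ : ℂ) * Complex.exp (Complex.I * φ)) =
      sin θ * (cos φ - sin φ * Complex.I) := by
    rw [mul_comm Complex.I, Complex.exp_mul_I]
    simp [← Complex.ofReal_cos, ← Complex.ofReal_sin, Complex.conj_ofReal, sub_eq_add_neg]
  have hexp (φ : ℝ) : Complex.exp (Complex.I * φ) = cos φ + sin φ * Complex.I := by
    rw [mul_comm, Complex.exp_mul_I, Complex.ofReal_cos, Complex.ofReal_sin]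
  have hpyth (x : ℝ) : (sin x : ℂ) ^ 2 + (cos x : ℂ) ^ 2 = 1 := by
    exact_mod_cast sin_sq_add_cos_sq x
  have hcc : IsSphericalAffine fun θ φ : ℝ => star (cos θ : ℂ) * cos θ :=
    .of_coord (1 / 2) ![0, 0, 1 / 2] fun θ φ => by
      simp only [hcoord, Complex.star_def, Complex.conj_ofReal]
      ring
  have hss : IsSphericalAffine fun θ φ : ℝ =>
      star ((sin θ : ℂ) * Complex.exp (Complex.I * φ)) * ((sin θ : ℂ) * Complex.exp (Complex.I * φ)) :=
    .of_coord (1 / 2) ![0, 0, -1 / 2] fun θ φ => by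
      simp only [hcoord, hstar]
      rw [hexp]
      linear_combination (sin θ : ℂ) ^ 2 * hpyth φ + hpyth θ -
        (sin θ : ℂ) ^ 2 * (sin φ : ℂ) ^ 2 * Complex.I_sq
  have hcs : IsSphericalAffine fun θ φ : ℝ =>
      star (cos θ : ℂ) * ((sin θ : ℂ) * Complex.exp (Complex.I * φ)) :=
    .of_coord 0 ![1 / 2, Complex.I / 2, 0] fun θ φ => by
      simp only [hcoord, hexp, Complex.star_def, Complex.conj_ofReal]
      ring
  have hsc : IsSphericalAffine fun θ φ : ℝ =>
      star ((sin θ : ℂ) * Complex.exp (Complex.I * φ)) * cos θ :=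
    .of_coord 0 ![1 / 2, -Complex.I / 2, 0] fun θ φ => by
      simp only [hcoord, hstar]
      ring
  unfold tmatRow
  split_ifs <;> first | exact hcc | exact hss | exact hcs | exact hsc |
    simpa using IsSphericalAffine.const (0 : ℂ)

section Tmat

variable {n : ℕ} {θ φ : ℝ} {k : Fin n}

lemma Tmat_apply_of_val_eq_zero (hk : (k : ℕ) = 0) (p : Fin n) :
    Tmat n θ φ k p = tmatRow n θ φ p := by
  simp only [Tmat, tmatRow, Matrix.of_apply, hk, Fin.ext_iff, true_and, false_and, zero_ne_one,
    ↓reduceIte]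
  split_ifs <;> first | rfl | omega

lemma Tmat_apply_of_val_eq_one (hk : (k : ℕ) = 1) (p : Fin n) :
    Tmat n θ φ k p = tmatRow n (θ + π / 2) φ p := by
  simp only [Tmat, tmatRow, Matrix.of_apply, hk, Fin.ext_iff, true_and, false_and, one_ne_zero,
    ↓reduceIte, cos_add_pi_div_two, sin_add_pi_div_two, Complex.ofReal_neg]
  split_ifs <;> first | rfl | omega

lemma Tmat_apply_of_two_le (hk : 2 ≤ (k : ℕ)) (p : Fin n) :
    Tmat n θ φ k p = if k = p then 1 else 0 := by
  simp only [Tmat, Matrix.of_apply]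
  split_ifs <;> first | rfl | omega

end Tmat

lemma isSphericalAffine_star_Tmat_mul_Tmat {n : ℕ} (k p q : Fin n) :
    IsSphericalAffine fun θ φ => star (Tmat n θ φ k p) * Tmat n θ φ k q := by
  rcases Nat.lt_or_ge (k : ℕ) 2 with hk | hk
  · interval_cases hk' : (k : ℕ)
    · simpa only [Tmat_apply_of_val_eq_zero hk'] using
        isSphericalAffine_star_tmatRow_mul_tmatRow p q
    · simpa only [Tmat_apply_of_val_eq_one hk'] using
        (isSphericalAffine_star_tmatRow_mul_tmatRow p q).comp_add_pi_div_two
  · simpa only [Tmat_apply_of_two_le hk] using IsSphericalAffine.const _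

lemma isSphericalAffine_conj_Tmat {n : ℕ} (d : Fin n → ℝ) :
    IsSphericalAffine fun θ φ =>
      (Tmat n θ φ)ᴴ * Matrix.diagonal (fun j => (d j : ℂ)) * Tmat n θ φ := by
  refine .pi fun p => .pi fun q => ?_
  have hentry (θ φ : ℝ) : ((Tmat n θ φ)ᴴ * Matrix.diagonal (fun j => (d j : ℂ)) * Tmat n θ φ) p q =
      ∑ k, d k • (star (Tmat n θ φ k p) * Tmat n θ φ k q) := by
    rw [Matrix.mul_apply]
    simp only [Matrix.mul_diagonal, Matrix.conjTranspose_apply, Complex.real_smul]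
    exact Finset.sum_congr rfl fun k _ => by ring
  simp only [hentry]
  exact .sum _ fun k _ => (isSphericalAffine_star_Tmat_mul_Tmat k p q).smul (d k)

lemma image2_sphericalPoint_two_mul :
    Set.image2 (fun θ φ => sphericalPoint (2 * θ) φ) (Set.Icc 0 π) (Set.Icc 0 (2 * π)) =
      Metric.sphere (0 : EuclideanSpace ℝ (Fin 3)) 1 := by
  refine subset_antisymm ?_ fun v hv => ?_
  · rintro _ ⟨θ, -, φ, -, rfl⟩
    exact sphericalPoint_mem_sphere _ _
  · obtain ⟨θ, ⟨hθ₀, hθ₁⟩, φ, hφ, rfl⟩ := exists_sphericalPoint_eq hv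
    exact ⟨θ / 2, ⟨by linarith, by linarith⟩, φ, hφ, by simp only [mul_div_cancel₀ θ two_ne_zero]⟩

end

theorem stmt2_general {n m : ℕ} (d : Fin m → Fin n → ℝ)
    (L : (Fin m → Matrix (Fin n) (Fin n) ℂ) →ₗ[ℝ] (Fin 3 → ℝ))
    (U : Matrix (Fin n) (Fin n) ℂ) :
    ∃ f : EuclideanSpace ℝ (Fin 3) →ᵃ[ℝ] (Fin 3 → ℝ),
      Eset L (fun i => Matrix.diagonal fun j => (d i j : ℂ)) U =
        f '' Metric.sphere (0 : EuclideanSpace ℝ (Fin 3)) 1 := by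
  let conjU : Matrix (Fin n) (Fin n) ℂ →ₗ[ℝ] Matrix (Fin n) (Fin n) ℂ :=
    LinearMap.mulLeft ℝ Uᴴ ∘ₗ LinearMap.mulRight ℝ U
  obtain ⟨f, hf⟩ : IsSphericalAffine fun θ φ =>
      L fun i => Uᴴ * (Tmat n θ φ)ᴴ * Matrix.diagonal (fun j => (d i j : ℂ)) * Tmat n θ φ * U := by
    simpa only [conjU, LinearMap.comp_apply, LinearMap.mulLeft_apply, LinearMap.mulRight_apply,
      Matrix.mul_assoc] using
      (IsSphericalAffine.pi fun i => (isSphericalAffine_conj_Tmat (d i)).map conjU).map L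
  refine ⟨f, ?_⟩
  rw [← image2_sphericalPoint_two_mul, Set.image_image2]
  ext y
  simp only [Eset, Set.mem_ofPred_eq, Set.mem_image2, hf, eq_comm]

/-- For a tuple of real diagonal matrices `D` and any unitary `U`, the set `E_L(D,U)` is an
(ellipsoid, i.e. the) image of the unit sphere `S² ⊆ ℝ³` under an affine map. -/
theorem stmt2 {n m : ℕ} (d : Fin m → Fin n → ℝ)
    (L : (Fin m → Matrix (Fin n) (Fin n) ℂ) →ₗ[ℝ] (Fin 3 → ℝ))
    (U : Matrix (Fin n) (Fin n) ℂ) (hU : U ∈ Matrix.unitaryGroup (Fin n) ℂ) :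
    ∃ f : EuclideanSpace ℝ (Fin 3) →ᵃ[ℝ] (Fin 3 → ℝ),
      Eset L (fun i => Matrix.diagonal fun j => (d i j : ℂ)) U =
        f '' Metric.sphere (0 : EuclideanSpace ℝ (Fin 3)) 1 :=
  stmt2_general d L U
end

section
/- Let n > 2, let D = (D₁,...,D_m) be an m-tuple of n×n real diagonal matrices (viewed as Hermitian matrices), and let L : (H_n)^m → ℝ³ be a linear map. Then there exists a unitary matrix V ∈ U_n such that the set E_L(D,V) := { L(V*T*_{θ,φ} D₁ T_{θ,φ} V, ..., V*T*_{θ,φ} D_m T_{θ,φ} V) : θ ∈ [0,π], φ ∈ [0,2π] } is contained in an affine plane of ℝ³ (i.e., there exist a nonzero vector w ∈ ℝ³ and c ∈ ℝ with ⟨w, y⟩ = c for all y ∈ E_L(D,V)). -/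
open Matrix

/-!
Conjugating a real diagonal `D` by `T_{θ,φ}` only changes its leading 2×2 block, and the change
depends on `D` only through `d₀ - d₁`: `Tᴴ D T = D + (d₀ - d₁) M_{θ,φ}` with `M_{θ,φ}` Hermitian,
traceless and supported on that block. Hence the first coordinate of `L` at the conjugated tuple is
a constant plus `ψ (Vᴴ M_{θ,φ} V)` for one real functional `ψ`, which on Hermitian matrices is
`X ↦ Re tr (H X)` with `H` Hermitian. It therefore suffices that the leading 2×2 block of `V H Vᴴ`
be scalar. For `n ≥ 3` this is arranged from eigenvectors `v₁, v₂, v₃` of `H` with eigenvalues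
`λ₁ ≥ λ₂ ≥ λ₃`: take `v₂` together with a unit vector `α v₁ + β v₃` whose Rayleigh quotient is `λ₂`.
-/

open RCLike in
theorem Matrix.exists_isHermitian_re_trace_mul {𝕜 ι : Type*} [RCLike 𝕜] [Fintype ι] [DecidableEq ι]
    (ψ : Matrix ι ι 𝕜 →ₗ[ℝ] ℝ) :
    ∃ H : Matrix ι ι 𝕜, H.IsHermitian ∧ ∀ X : Matrix ι ι 𝕜, X.IsHermitian →
      ψ X = re (trace (H * X)) := by
  set f : Module.Dual 𝕜 (Matrix ι ι 𝕜) := Module.Dual.extendRCLike ψ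
  set A : Matrix ι ι 𝕜 := of fun i j => f (single j i 1)
  have hf (X : Matrix ι ι 𝕜) : f X = trace (A * X) := by
    conv_lhs => rw [matrix_eq_sum_single X]
    have hsingle (i j : ι) : single i j (X i j) = X i j • single i j (1 : 𝕜) := by
      rw [smul_single, smul_eq_mul, mul_one]
    simp only [hsingle, map_sum, map_smul, trace, mul_apply, A, of_apply, diag, smul_eq_mul]
    rw [Finset.sum_comm]
    simp [mul_comm]
  refine ⟨(2⁻¹ : ℝ) • (A + Aᴴ), (isHermitian_add_transpose_self A).smul (.all _), fun X hX => ?_⟩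
  have hAX : re (trace (Aᴴ * X)) = re (trace (A * X)) := by
    conv_lhs => rw [← hX.eq]
    rw [← conjTranspose_mul, trace_conjTranspose, star_def, conj_re, trace_mul_comm]
  rw [smul_mul, trace_smul, add_mul, trace_add, smul_re, map_add, hAX, ← hf,
    Module.Dual.re_extendRCLike_apply]
  ring

theorem exists_sq_weights_of_le_of_le {a b c : ℝ} (hcb : c ≤ b) (hba : b ≤ a) :
    ∃ α β : ℝ, α ^ 2 + β ^ 2 = 1 ∧ α ^ 2 * a + β ^ 2 * c = b := by
  obtain ⟨s, t, hs, ht, hst, rfl⟩ : b ∈ segment ℝ c a := by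
    rw [segment_eq_Icc (hcb.trans hba)]; exact ⟨hcb, hba⟩
  refine ⟨√t, √s, ?_, ?_⟩ <;> simp [Real.sq_sqrt, hs, ht] <;> linarith

open scoped InnerProductSpace in
theorem LinearMap.IsSymmetric.exists_orthonormal_pair_scalar_compression {𝕜 E : Type*} [RCLike 𝕜]
    [NormedAddCommGroup E] [InnerProductSpace 𝕜 E] [FiniteDimensional 𝕜 E] {T : E →ₗ[𝕜] E}
    (hT : T.IsSymmetric) (hE : 3 ≤ Module.finrank 𝕜 E) :
    ∃ u : Fin 2 → E, Orthonormal 𝕜 u ∧ ⟪u 0, T (u 1)⟫_𝕜 = 0 ∧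
      ⟪u 0, T (u 0)⟫_𝕜 = ⟪u 1, T (u 1)⟫_𝕜 := by
  set v := hT.eigenvectorBasis rfl
  set μ := hT.eigenvalues rfl
  have hv (p q) : ⟪v p, v q⟫_𝕜 = if p = q then 1 else 0 := orthonormal_iff_ite.mp v.orthonormal p q
  have hTv (p) : T (v p) = (μ p : 𝕜) • v p := hT.apply_eigenvectorBasis rfl p
  let a : Fin (Module.finrank 𝕜 E) := ⟨0, by omega⟩
  let b : Fin (Module.finrank 𝕜 E) := ⟨1, by omega⟩
  let c : Fin (Module.finrank 𝕜 E) := ⟨2, by omega⟩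
  have hab : a ≠ b := by simp [a, b, Fin.ext_iff]
  have hbc : b ≠ c := by simp [b, c, Fin.ext_iff]
  have hac : a ≠ c := by simp [a, c, Fin.ext_iff]
  obtain ⟨α, β, hαβ, hμ⟩ := exists_sq_weights_of_le_of_le
    (hT.eigenvalues_antitone rfl (show b ≤ c by simp [b, c, Fin.le_iff_val_le_val]))
    (hT.eigenvalues_antitone rfl (show a ≤ b by simp [a, b, Fin.le_iff_val_le_val]))
  refine ⟨![v b, (α : 𝕜) • v a + (β : 𝕜) • v c], ?_, ?_, ?_⟩
  · rw [orthonormal_iff_ite]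
    intro p q
    fin_cases p <;> fin_cases q <;>
      simp [inner_add_left, inner_add_right, inner_smul_left, inner_smul_right, hv, hab, hbc, hac,
        hab.symm, hbc.symm, hac.symm, -inner_self_eq_norm_sq_to_K]
    exact_mod_cast (by linear_combination hαβ : α * α + β * β = 1)
  · simp [map_add, map_smul, hTv, inner_add_right, inner_smul_right, hv, hab.symm, hbc]
  · simp [map_add, map_smul, hTv, inner_add_left, inner_add_right, inner_smul_left,
      inner_smul_right, hv, hac, hac.symm]
    exact_mod_cast (by linear_combination -hμ : μ b = α * (μ a * α) + β * (μ c * β))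

open scoped InnerProductSpace in
theorem Matrix.conjTranspose_toMatrix_mul_mul_toMatrix_apply {𝕜 ι : Type*} [RCLike 𝕜]
    [Fintype ι] [DecidableEq ι] (b : OrthonormalBasis ι 𝕜 (EuclideanSpace 𝕜 ι))
    (H : Matrix ι ι 𝕜) (p q : ι) :
    (((EuclideanSpace.basisFun ι 𝕜).toBasis.toMatrix b)ᴴ * H *
      (EuclideanSpace.basisFun ι 𝕜).toBasis.toMatrix b) p q = ⟪b p, toEuclideanLin H (b q)⟫_𝕜 := by
  simp [EuclideanSpace.inner_eq_star_dotProduct, Module.Basis.toMatrix_apply, mul_apply, dotProduct,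
    mulVec, Finset.sum_mul, conjTranspose_apply]
  rw [Finset.sum_comm]
  exact Finset.sum_congr rfl fun _ _ => Finset.sum_congr rfl fun _ _ => by ring

open scoped InnerProductSpace in
theorem Matrix.IsHermitian.exists_unitary_conj_scalar_block {𝕜 ι : Type*} [RCLike 𝕜]
    [Fintype ι] [DecidableEq ι] {H : Matrix ι ι 𝕜} (hH : H.IsHermitian)
    (hι : 3 ≤ Fintype.card ι) {i j : ι} (hij : i ≠ j) :
    ∃ U ∈ unitaryGroup ι 𝕜, (Uᴴ * H * U) i j = 0 ∧ (Uᴴ * H * U) j i = 0 ∧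
      (Uᴴ * H * U) i i = (Uᴴ * H * U) j j := by
  have hT := isSymmetric_toEuclideanLin_iff.mpr hH
  obtain ⟨u, hu, hu01, hu00⟩ :=
    hT.exists_orthonormal_pair_scalar_compression (by rwa [finrank_euclideanSpace])
  let g : ι → Fin 2 := fun l => if l = j then 1 else 0
  have hg : Set.InjOn g {i, j} := by
    rintro x (rfl | rfl) y (rfl | rfl) hxy <;> simp_all [g]
  obtain ⟨b, hb⟩ := (hu.comp _ hg.injective).exists_orthonormalBasis_extension_of_card_eq
    (v := u ∘ g) (s := {i, j}) finrank_euclideanSpace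
  have hbi : b i = u 0 := by simpa [g, hij] using hb i (by simp)
  have hbj : b j = u 1 := by simpa [g] using hb j (by simp)
  refine ⟨_, (EuclideanSpace.basisFun ι 𝕜).toMatrix_orthonormalBasis_mem_unitary b, ?_⟩
  simp only [conjTranspose_toMatrix_mul_mul_toMatrix_apply, hbi, hbj]
  refine ⟨hu01, ?_, hu00⟩
  rw [← hT, ← inner_conj_symm, hu01, map_zero]

section Tmat
variable {k : ℕ} (θ φ : ℝ)

@[simp] lemma Tmat_zero_zero : Tmat (k + 2) θ φ 0 0 = Real.cos θ := by simp [Tmat]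
@[simp] lemma Tmat_zero_one : Tmat (k + 2) θ φ 0 1 = Real.sin θ * Complex.exp (Complex.I * φ) := by
  simp [Tmat]
@[simp] lemma Tmat_one_zero : Tmat (k + 2) θ φ 1 0 = -Real.sin θ := by simp [Tmat]
@[simp] lemma Tmat_one_one : Tmat (k + 2) θ φ 1 1 = Real.cos θ * Complex.exp (Complex.I * φ) := by
  simp [Tmat]
@[simp] lemma Tmat_succ_succ_left (i : Fin k) (j : Fin (k + 2)) :
    Tmat (k + 2) θ φ i.succ.succ j = (1 : Matrix _ _ ℂ) i.succ.succ j := by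
  simp [Tmat, one_apply]
@[simp] lemma Tmat_succ_succ_right (i : Fin (k + 2)) (j : Fin k) :
    Tmat (k + 2) θ φ i j.succ.succ = (1 : Matrix _ _ ℂ) i j.succ.succ := by
  simp [Tmat, one_apply]
end Tmat

noncomputable def tmatDefect (k : ℕ) (θ φ : ℝ) : Matrix (Fin (k + 2)) (Fin (k + 2)) ℂ :=
  single 0 0 (-(Real.sin θ : ℂ) ^ 2) + single 1 1 ((Real.sin θ : ℂ) ^ 2)
    + single 0 1 (Real.cos θ * Real.sin θ * Complex.exp (Complex.I * φ))
    + single 1 0 (Real.cos θ * Real.sin θ * star (Complex.exp (Complex.I * φ)))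

theorem conjTranspose_Tmat_mul_diagonal_mul_Tmat (k : ℕ) (θ φ : ℝ) (d : Fin (k + 2) → ℝ) :
    (Tmat (k + 2) θ φ)ᴴ * diagonal (fun j => (d j : ℂ)) * Tmat (k + 2) θ φ
      = diagonal (fun j => (d j : ℂ)) + (d 0 - d 1) • tmatDefect k θ φ := by
  have hs : (Real.sin θ : ℂ) ^ 2 + (Real.cos θ : ℂ) ^ 2 = 1 := by
    exact_mod_cast Real.sin_sq_add_cos_sq θ
  have he : starRingEnd ℂ (Complex.exp (Complex.I * φ)) * Complex.exp (Complex.I * φ) = 1 := by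
    rw [mul_comm, Complex.mul_conj, Complex.normSq_eq_norm_sq, mul_comm,
      Complex.norm_exp_ofReal_mul_I]
    simp
  have h0 (j : Fin k) : j.succ.succ ≠ (0 : Fin (k + 2)) := Fin.succ_ne_zero _
  have h1 (j : Fin k) : j.succ.succ ≠ (1 : Fin (k + 2)) := by simp [Fin.ext_iff]
  ext i j
  rw [mul_apply, Fin.sum_univ_succ, Fin.sum_univ_succ]
  simp only [mul_diagonal, conjTranspose_apply]
  refine Fin.cases ?_ (Fin.cases ?_ fun i => ?_) i <;>
    refine Fin.cases ?_ (Fin.cases ?_ fun j => ?_) j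
  all_goals simp [tmatDefect, diagonal_apply, one_apply, h0, h1, (h0 _).symm, (h1 _).symm,
    -Complex.ofReal_sin, -Complex.ofReal_cos]
  · linear_combination (d 0 : ℂ) * hs
  · ring
  · ring
  · linear_combination
      ((Real.sin θ : ℂ) ^ 2 * d 0 + (Real.cos θ : ℂ) ^ 2 * d 1) * he + (d 1 : ℂ) * hs
  · by_cases h : i = j <;> simp [h, eq_comm]

theorem tmatDefect_isHermitian (k : ℕ) (θ φ : ℝ) : (tmatDefect k θ φ).IsHermitian := by
  simp only [IsHermitian, tmatDefect, conjTranspose_add, conjTranspose_single]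
  simp [-Complex.ofReal_sin, -Complex.ofReal_cos]
  abel

theorem trace_mul_tmatDefect {k : ℕ} (θ φ : ℝ) {G : Matrix (Fin (k + 2)) (Fin (k + 2)) ℂ}
    (h01 : G 0 1 = 0) (h10 : G 1 0 = 0) (h00 : G 0 0 = G 1 1) :
    trace (G * tmatDefect k θ φ) = 0 := by
  simp [tmatDefect, Matrix.mul_add, trace_mul_single, h01, h10, h00]

/-- For `n > 2` and a tuple of real diagonal matrices `D`, there is a unitary `V` such that
`E_L(D,V)` degenerates, i.e. is contained in an affine plane of `ℝ³`. -/
theorem stmt3 {n m : ℕ} (hn : 2 < n) (d : Fin m → Fin n → ℝ)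
    (L : (Fin m → Matrix (Fin n) (Fin n) ℂ) →ₗ[ℝ] (Fin 3 → ℝ)) :
    ∃ V ∈ Matrix.unitaryGroup (Fin n) ℂ, ∃ w : Fin 3 → ℝ, w ≠ 0 ∧ ∃ c : ℝ,
      ∀ y ∈ Eset L (fun i => Matrix.diagonal fun j => (d i j : ℂ)) V,
        ∑ k, w k * y k = c := by
  obtain ⟨k, rfl⟩ : ∃ k, n = k + 2 := ⟨n - 2, by omega⟩
  let ψ : Matrix (Fin (k + 2)) (Fin (k + 2)) ℂ →ₗ[ℝ] ℝ :=
    LinearMap.proj 0 ∘ₗ L ∘ₗ LinearMap.pi fun i => (d i 0 - d i 1) • LinearMap.id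
  obtain ⟨H, hH, hψ⟩ := exists_isHermitian_re_trace_mul ψ
  obtain ⟨U, hU, h01, h10, h00⟩ :=
    hH.exists_unitary_conj_scalar_block (by simp; omega) (zero_ne_one (α := Fin (k + 2)))
  refine ⟨Uᴴ, Unitary.star_mem hU, Pi.single 0 1, by simp,
    L (fun i => U * diagonal (fun j => (d i j : ℂ)) * Uᴴ) 0, ?_⟩
  rintro _ ⟨θ, -, φ, -, rfl⟩
  have hconj : (fun i => Uᴴᴴ * (Tmat (k + 2) θ φ)ᴴ * diagonal (fun j => (d i j : ℂ)) *
      Tmat (k + 2) θ φ * Uᴴ) = (fun i => U * diagonal (fun j => (d i j : ℂ)) * Uᴴ) +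
      fun i => (d i 0 - d i 1) • (U * tmatDefect k θ φ * Uᴴ) := by
    ext1 i
    simp only [conjTranspose_conjTranspose, Matrix.mul_assoc, Pi.add_apply]
    rw [← Matrix.mul_assoc (Tmat (k + 2) θ φ)ᴴ, ← Matrix.mul_assoc _ (Tmat (k + 2) θ φ),
      conjTranspose_Tmat_mul_diagonal_mul_Tmat]
    simp only [Matrix.add_mul, Matrix.mul_add, Matrix.smul_mul, Matrix.mul_smul]
  have hdefect : ψ (U * tmatDefect k θ φ * Uᴴ) = 0 := by
    rw [hψ _ (isHermitian_mul_mul_conjTranspose U (tmatDefect_isHermitian k θ φ)),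
      ← Matrix.mul_assoc, trace_mul_cycle, ← Matrix.mul_assoc, trace_mul_tmatDefect θ φ h01 h10 h00,
      RCLike.zero_re]
  rw [hconj, map_add]
  simp [Pi.single_apply]
  exact hdefect
end

section
/- Let n ≥ 2 and let D = (diag(d⁽¹⁾),...,diag(d⁽ᵐ⁾)) and D̂ = (diag(d̂⁽¹⁾),...,diag(d̂⁽ᵐ⁾)) be m-tuples of n×n real diagonal matrices with d⁽ⁱ⁾, d̂⁽ⁱ⁾ ∈ ℝⁿ. If D̂ ≺ D, then for every linear map L : (H_n)^m → ℝ² one has W_L(D̂) ⊆ W_L(D). -/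
open Matrix

/-- The `L`-numerical range of an `m`-tuple of `n × n` complex matrices:
`W_L(A) = { L(U*A₁U, ..., U*A_mU) : U unitary }`. -/
noncomputable def LNumericalRange {n m l : ℕ}
    (L : (Fin m → Matrix (Fin n) (Fin n) ℂ) →ₗ[ℝ] (Fin l → ℝ))
    (A : Fin m → Matrix (Fin n) (Fin n) ℂ) : Set (Fin l → ℝ) :=
  {y | ∃ U ∈ Matrix.unitaryGroup (Fin n) ℂ, y = L fun i => Uᴴ * A i * U}

/-- An `n × n` real matrix is a pinching matrix if for some `s < t` and `α ∈ [0,1]` its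
`(s,s)` and `(t,t)` entries are `α`, its `(s,t)` and `(t,s)` entries are `1 − α`, the
remaining diagonal entries are `1`, and all other entries vanish. -/
def IsPinching {n : ℕ} (P : Matrix (Fin n) (Fin n) ℝ) : Prop :=
  ∃ s t : Fin n, s < t ∧ ∃ α ∈ Set.Icc (0 : ℝ) 1,
    P = Matrix.of fun i j =>
      if i = s ∧ j = s then α
      else if i = t ∧ j = t then α
      else if i = s ∧ j = t then 1 - α
      else if i = t ∧ j = s then 1 - α
      else if i = j then 1 else 0

/-- `D̂ ≺ D` for tuples of diagonal matrices with diagonal vectors `dhat`, `d`: there are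
finitely many pinching matrices `P₁, ..., P_k` with `dhat i = P₁P₂⋯P_k d i` for all `i`. -/
def PinchPrec {n m : ℕ} (dhat d : Fin m → Fin n → ℝ) : Prop :=
  ∃ Ps : List (Matrix (Fin n) (Fin n) ℝ),
    (∀ P ∈ Ps, IsPinching P) ∧ ∀ i, dhat i = Ps.prod *ᵥ d i

/-!
A pinching with parameter `α` on the coordinates `s, t` turns `diag d` into
`diag d + (1 - α)(d_t - d_s)(E_ss - E_tt)`. Conjugating `diag d` by the rotation with angle `θ`
and phase `c` in the `(s, t)`-plane gives
`diag d + sin² θ (d_t - d_s)(E_ss - E_tt) + sin θ cos θ (d_t - d_s)(c E_st + c̄ E_ts)`.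
After applying `L`, the middle term is `sin² θ • w` for a fixed `w ∈ ℝ²`, and the last one is
`sin θ cos θ • g c` for an `ℝ`-linear `g : ℂ → ℝ²`. As `ℝ² ⧸ ℝ w` has dimension at most one, some
unit `c` has `g c = μ • w`, and the intermediate value theorem applied to
`sin² θ + μ sin θ cos θ` on `[0, π/2]` reaches `1 - α`. Precomposing `L` with a unitary
conjugation moves from `L(D̂)` to an arbitrary point of `W_L(D̂)`, and induction on the number of
pinchings concludes.
-/

open Module

theorem exists_norm_eq_one_map_mem_span_singleton {E : Type*} [AddCommGroup E] [Module ℝ E]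
    [FiniteDimensional ℝ E] (hE : finrank ℝ E ≤ 2) {w : E} (hw : w ≠ 0) (g : ℂ →ₗ[ℝ] E) :
    ∃ c : ℂ, ‖c‖ = 1 ∧ g c ∈ ℝ ∙ w := by
  have hquot : finrank ℝ (E ⧸ ℝ ∙ w) < finrank ℝ ℂ := by
    have := (ℝ ∙ w).finrank_quotient_add_finrank
    rw [finrank_span_singleton hw] at this
    rw [Complex.finrank_real_complex]
    omega
  obtain ⟨c, hc, hc0⟩ := Submodule.exists_mem_ne_zero_of_ne_bot
    (LinearMap.ker_ne_bot_of_finrank_lt (f := (ℝ ∙ w).mkQ ∘ₗ g) hquot)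
  refine ⟨(‖c‖⁻¹ : ℝ) • c, by simp [hc0], ?_⟩
  rw [map_smul]
  exact Submodule.smul_mem _ _ ((Submodule.Quotient.mk_eq_zero _).1 hc)

theorem exists_sin_sq_smul_add_eq {E : Type*} [AddCommGroup E] [Module ℝ E]
    [FiniteDimensional ℝ E] (hE : finrank ℝ E ≤ 2) (w : E) (g : ℂ →ₗ[ℝ] E) {β : ℝ}
    (hβ : β ∈ Set.Icc 0 1) :
    ∃ θ : ℝ, ∃ c : ℂ, ‖c‖ = 1 ∧
      Real.sin θ ^ 2 • w + (Real.sin θ * Real.cos θ) • g c = β • w := by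
  rcases eq_or_ne w 0 with rfl | hw
  · exact ⟨0, 1, by simp⟩
  obtain ⟨c, hc, hgc⟩ := exists_norm_eq_one_map_mem_span_singleton hE hw g
  obtain ⟨μ, hμ⟩ := Submodule.mem_span_singleton.1 hgc
  set f : ℝ → ℝ := fun θ => Real.sin θ ^ 2 + μ * (Real.sin θ * Real.cos θ)
  have hβ' : β ∈ Set.Icc (f 0) (f (Real.pi / 2)) := by simpa [f] using hβ
  obtain ⟨θ, -, hθ⟩ := intermediate_value_Icc (by positivity) (by fun_prop) hβ'
  refine ⟨θ, c, hc, ?_⟩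
  rw [← hθ, ← hμ, smul_smul, ← add_smul]
  simp only [f]
  ring_nf

section PlaneRotation

variable {ι : Type*} [Fintype ι] [DecidableEq ι]

-- The identity outside rows and columns `s, t`, where it is `!![cos θ, -c sin θ; sin θ, c cos θ]`.
noncomputable def planeRotation (s t : ι) (θ : ℝ) (c : ℂ) : Matrix ι ι ℂ :=
  of fun i j =>
    if j = s then (if i = s then Real.cos θ else if i = t then Real.sin θ else 0)
    else if j = t then (if i = s then -(Real.sin θ * c) else if i = t then Real.cos θ * c else 0)
    else if i = j then 1 else 0

noncomputable def offDiagonalPair (s t : ι) : ℂ →ₗ[ℝ] Matrix ι ι ℂ :=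
  singleLinearMap ℝ s t + singleLinearMap ℝ t s ∘ₗ Complex.conjAe.toLinearMap

theorem conjTranspose_mul_diagonal_mul_apply (U : Matrix ι ι ℂ) (v : ι → ℂ) (a b : ι) :
    (Uᴴ * diagonal v * U) a b = ∑ k, star (U k a) * v k * U k b := by
  simp [mul_apply, diagonal_apply]

theorem conjTranspose_planeRotation_mul_diagonal_mul {s t : ι} (hst : s ≠ t) (θ : ℝ) {c : ℂ}
    (hc : ‖c‖ = 1) (v : ι → ℝ) :
    (planeRotation s t θ c)ᴴ * diagonal (fun j => (v j : ℂ)) * planeRotation s t θ c =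
      diagonal (fun j => (v j : ℂ)) + (v t - v s) •
        (Real.sin θ ^ 2 • (single s s 1 - single t t 1) +
          (Real.sin θ * Real.cos θ) • offDiagonalPair s t c) := by
  ext a b
  rw [conjTranspose_mul_diagonal_mul_apply]
  obtain rfl | rfl | ⟨has, hat⟩ : s = a ∨ t = a ∨ (a ≠ s ∧ a ≠ t) := by tauto
  all_goals obtain rfl | rfl | ⟨hbs, hbt⟩ : s = b ∨ t = b ∨ (b ≠ s ∧ b ≠ t) := by tauto
  case inr.inr.inr.inr =>
    rw [Fintype.sum_eq_single a fun k hk => by simp [planeRotation, *]]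
    simp [planeRotation, offDiagonalPair, diagonal_apply, has.symm, hat.symm, *]
  all_goals
    rw [Fintype.sum_eq_add s t hst fun k hk => by simp [planeRotation, hk.1, hk.2, *]]
    simp [planeRotation, offDiagonalPair, hst.symm, @eq_comm _ s, @eq_comm _ t,
      -Complex.ofReal_cos, -Complex.ofReal_sin, *]
  all_goals
    have hcc : starRingEnd ℂ c * c = 1 := by rw [Complex.conj_mul', hc]; simp
    have htrig : (Real.sin θ : ℂ) ^ 2 + (Real.cos θ : ℂ) ^ 2 = 1 := by
      exact_mod_cast Real.sin_sq_add_cos_sq θ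
    first
      | ring1
      | linear_combination (v s : ℂ) * htrig
      | linear_combination ((Real.sin θ : ℂ) ^ 2 * v s + (Real.cos θ : ℂ) ^ 2 * v t) * hcc +
          (v t : ℂ) * htrig

theorem planeRotation_mem_unitaryGroup {s t : ι} (hst : s ≠ t) (θ : ℝ) {c : ℂ} (hc : ‖c‖ = 1) :
    planeRotation s t θ c ∈ unitaryGroup ι ℂ := by
  have h := conjTranspose_planeRotation_mul_diagonal_mul hst θ hc 1
  simp only [Pi.one_apply, Complex.ofReal_one, diagonal_one, Matrix.mul_one, sub_self,
    zero_smul, add_zero] at h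
  exact mem_unitaryGroup_iff'.2 h

end PlaneRotation

theorem IsPinching.exists_diagonal_mulVec {n : ℕ} {P : Matrix (Fin n) (Fin n) ℝ}
    (hP : IsPinching P) : ∃ s t : Fin n, s ≠ t ∧ ∃ β ∈ Set.Icc (0 : ℝ) 1, ∀ v : Fin n → ℝ,
      diagonal (fun j => ((P *ᵥ v) j : ℂ)) =
        diagonal (fun j => (v j : ℂ)) + (β * (v t - v s)) • (single s s 1 - single t t 1) := by
  obtain ⟨s, t, hst, α, hα, rfl⟩ := hP
  replace hst := hst.ne
  refine ⟨s, t, hst, 1 - α, ⟨by linarith [hα.2], by linarith [hα.1]⟩, fun v => ?_⟩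
  ext a b
  rcases eq_or_ne a b with rfl | hab
  · simp only [diagonal_apply_eq, mulVec, dotProduct]
    obtain rfl | rfl | ⟨has, hat⟩ : s = a ∨ t = a ∨ (a ≠ s ∧ a ≠ t) := by tauto
    case inr.inr =>
      rw [Fintype.sum_eq_single a fun k hk => by simp [has, hat, hk.symm]]
      simp [has, hat, has.symm, hat.symm]
    all_goals
      rw [Fintype.sum_eq_add s t hst fun k hk => by simp [hk.1, hk.2, hk.1.symm, hk.2.symm]]
      simp [hst, hst.symm]
    all_goals ring
  · have hsingle (i : Fin n) : single i i (1 : ℂ) a b = 0 :=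
      single_apply_of_ne i i 1 a b fun h => hab (h.1.symm.trans h.2)
    simp [hab, hsingle]

section LNumericalRange

variable {n m l : ℕ}

theorem diagonal_add_smul_single_sub_single_mem_lNumericalRange (hl : l ≤ 2)
    (L : (Fin m → Matrix (Fin n) (Fin n) ℂ) →ₗ[ℝ] (Fin l → ℝ)) (d : Fin m → Fin n → ℝ)
    {s t : Fin n} (hst : s ≠ t) {β : ℝ} (hβ : β ∈ Set.Icc 0 1) :
    L (fun i => diagonal (fun j => (d i j : ℂ)) +
        (β * (d i t - d i s)) • (single s s 1 - single t t 1)) ∈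
      LNumericalRange L (fun i => diagonal fun j => (d i j : ℂ)) := by
  set D : Fin m → Matrix (Fin n) (Fin n) ℂ := fun i => diagonal fun j => (d i j : ℂ)
  set A : Fin m → Matrix (Fin n) (Fin n) ℂ :=
    fun i => (d i t - d i s) • (single s s 1 - single t t 1)
  set B : ℂ →ₗ[ℝ] Fin m → Matrix (Fin n) (Fin n) ℂ :=
    LinearMap.pi fun i => (d i t - d i s) • offDiagonalPair s t
  obtain ⟨θ, c, hc, hθc⟩ :=
    exists_sin_sq_smul_add_eq (by simpa using hl) (L A) (L ∘ₗ B) hβ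
  refine ⟨planeRotation s t θ c, planeRotation_mem_unitaryGroup hst θ hc, ?_⟩
  have hconj : (fun i => (planeRotation s t θ c)ᴴ * D i * planeRotation s t θ c) =
      D + Real.sin θ ^ 2 • A + (Real.sin θ * Real.cos θ) • B c := by
    funext i
    simp only [D, A, B, conjTranspose_planeRotation_mul_diagonal_mul hst θ hc, Pi.add_apply,
      Pi.smul_apply, LinearMap.pi_apply, LinearMap.smul_apply]
    module
  have hpinch : (fun i => D i + (β * (d i t - d i s)) • (single s s 1 - single t t 1)) =
      D + β • A := by
    funext i
    simp only [A, Pi.add_apply, Pi.smul_apply, mul_smul]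
  rw [hpinch, hconj, map_add, map_add, map_add, map_smul, map_smul, map_smul, add_assoc, ← hθc]
  rfl

theorem lNumericalRange_diagonal_mulVec_subset (hl : l ≤ 2)
    (L : (Fin m → Matrix (Fin n) (Fin n) ℂ) →ₗ[ℝ] (Fin l → ℝ)) {P : Matrix (Fin n) (Fin n) ℝ}
    (hP : IsPinching P) (d : Fin m → Fin n → ℝ) :
    LNumericalRange L (fun i => diagonal fun j => ((P *ᵥ d i) j : ℂ)) ⊆
      LNumericalRange L (fun i => diagonal fun j => (d i j : ℂ)) := by
  obtain ⟨s, t, hst, β, hβ, hP⟩ := hP.exists_diagonal_mulVec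
  rintro _ ⟨U, hU, rfl⟩
  set conjU : (Fin m → Matrix (Fin n) (Fin n) ℂ) →ₗ[ℝ] Fin m → Matrix (Fin n) (Fin n) ℂ :=
    LinearMap.pi fun i => LinearMap.mulLeftRight ℝ (Uᴴ, U) ∘ₗ LinearMap.proj i
  have hconjU (X : Fin m → Matrix (Fin n) (Fin n) ℂ) : conjU X = fun i => Uᴴ * X i * U := rfl
  obtain ⟨V, hV, hLV⟩ :=
    diagonal_add_smul_single_sub_single_mem_lNumericalRange hl (L ∘ₗ conjU) d hst hβ
  rw [LinearMap.comp_apply, LinearMap.comp_apply, hconjU, hconjU] at hLV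
  refine ⟨V * U, mul_mem hV hU, ?_⟩
  simp only [hP]
  rw [hLV]
  simp only [conjTranspose_mul, Matrix.mul_assoc]

theorem lNumericalRange_diagonal_list_prod_mulVec_subset (hl : l ≤ 2)
    (L : (Fin m → Matrix (Fin n) (Fin n) ℂ) →ₗ[ℝ] (Fin l → ℝ))
    {Ps : List (Matrix (Fin n) (Fin n) ℝ)} (hPs : ∀ P ∈ Ps, IsPinching P)
    (d : Fin m → Fin n → ℝ) :
    LNumericalRange L (fun i => diagonal fun j => ((Ps.prod *ᵥ d i) j : ℂ)) ⊆
      LNumericalRange L (fun i => diagonal fun j => (d i j : ℂ)) := by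
  induction Ps with
  | nil => simp
  | cons P Ps ih =>
    simp only [List.prod_cons, ← mulVec_mulVec]
    exact (lNumericalRange_diagonal_mulVec_subset hl L (hPs P List.mem_cons_self) _).trans
      (ih fun Q hQ => hPs Q (List.mem_cons_of_mem P hQ))

end LNumericalRange

theorem stmt5_general {n m : ℕ} (d dhat : Fin m → Fin n → ℝ)
    (hprec : PinchPrec dhat d)
    (L : (Fin m → Matrix (Fin n) (Fin n) ℂ) →ₗ[ℝ] (Fin 2 → ℝ)) :
    LNumericalRange L (fun i => Matrix.diagonal fun j => (dhat i j : ℂ)) ⊆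
      LNumericalRange L (fun i => Matrix.diagonal fun j => (d i j : ℂ)) := by
  obtain ⟨Ps, hPs, hdhat⟩ := hprec
  simp only [hdhat]
  exact lNumericalRange_diagonal_list_prod_mulVec_subset le_rfl L hPs d

/-- If `n ≥ 2` and `D̂ ≺ D`, then `W_L(D̂) ⊆ W_L(D)` for every linear `L : H_n^m → ℝ²`. -/
theorem stmt5 {n m : ℕ} (hn : 2 ≤ n) (d dhat : Fin m → Fin n → ℝ)
    (hprec : PinchPrec dhat d)
    (L : (Fin m → Matrix (Fin n) (Fin n) ℂ) →ₗ[ℝ] (Fin 2 → ℝ)) :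
    LNumericalRange L (fun i => Matrix.diagonal fun j => (dhat i j : ℂ)) ⊆
      LNumericalRange L (fun i => Matrix.diagonal fun j => (d i j : ℂ)) :=
  stmt5_general d dhat hprec L
end

section
/- Let ℙ_n denote the set of all finite products of n×n pinching matrices. Then for every α ∈ [0,1], the matrix αI_n + (1−α)J_n belongs to the closure of ℙ_n (with respect to the standard topology on n×n real matrices), where J_n is the n×n matrix all of whose entries equal 1/n. -/
open Matrix

/-- `ℙ_n`, the set of all finite products of `n × n` pinching matrices. -/
def PinchingProducts (n : ℕ) : Set (Matrix (Fin n) (Fin n) ℝ) :=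
  {M | ∃ Ps : List (Matrix (Fin n) (Fin n) ℝ),
    (∀ P ∈ Ps, IsPinching P) ∧ M = Ps.prod}

/-!
A pinching with parameter `1 - c` is `1 - c • L_st`, where `L_st = (e_s - e_t)(e_s - e_t)ᵀ` is the
Laplacian of the edge `{s, t}`, and `∑_{s,t} L_st = 2n (1 - J)`. So a sweep of pinchings of
strength `c = (1 - a) / 2n` over all ordered pairs equals `1 - c ∑ L_st = a • 1 + (1 - a) • J` up
to `O((1 - a)²)`. All matrices involved are row-stochastic, hence of norm at most `1` in the
`ℓ∞` operator norm, so `N` sweeps with `a = α ^ (1/N)` differ from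
`a ^ N • 1 + (1 - a ^ N) • J = α • 1 + (1 - α) • J` (`J` is idempotent) by
`N · O((1 - a)²) = O(1/N)`. The case `α = 0` follows by closedness.
-/

section NormedRing

variable {R : Type*} [SeminormedRing R]

theorem norm_pow_sub_pow_le [NormOneClass R] {x y : R} (hx : ‖x‖ ≤ 1) (hy : ‖y‖ ≤ 1) (N : ℕ) :
    ‖x ^ N - y ^ N‖ ≤ N * ‖x - y‖ := by
  induction N with
  | zero => simp
  | succ N ih =>
    have hyN : ‖y ^ N‖ ≤ 1 := (norm_pow_le y N).trans (pow_le_one₀ (norm_nonneg y) hy)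
    calc ‖x ^ (N + 1) - y ^ (N + 1)‖ = ‖x * (x ^ N - y ^ N) + (x - y) * y ^ N‖ := by
          rw [pow_succ', pow_succ']; noncomm_ring
      _ ≤ ‖x‖ * ‖x ^ N - y ^ N‖ + ‖x - y‖ * ‖y ^ N‖ :=
          norm_add_le_of_le (norm_mul_le _ _) (norm_mul_le _ _)
      _ ≤ 1 * (N * ‖x - y‖) + ‖x - y‖ * 1 := by gcongr
      _ = (N + 1 : ℕ) * ‖x - y‖ := by push_cast; ring

theorem norm_list_sum_le_length_mul {l : List R} {δ : ℝ} (hδ : ∀ d ∈ l, ‖d‖ ≤ δ) :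
    ‖l.sum‖ ≤ l.length * δ := by
  induction l with
  | nil => simp
  | cons d l ih =>
    simp only [List.forall_mem_cons] at hδ
    simp only [List.sum_cons, List.length_cons]
    push_cast
    linarith [norm_add_le d l.sum, ih hδ.2, hδ.1]

theorem norm_prod_one_sub_sub_one_sub_sum_le {l : List R} {δ : ℝ}
    (h1 : ∀ d ∈ l, ‖1 - d‖ ≤ 1) (hδ : ∀ d ∈ l, ‖d‖ ≤ δ) :
    ‖(l.map (1 - ·)).prod - (1 - l.sum)‖ ≤ (l.length * δ) ^ 2 := by
  induction l with
  | nil => simp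
  | cons d l ih =>
    have hS := norm_list_sum_le_length_mul fun e he => hδ e (List.mem_cons_of_mem d he)
    simp only [List.forall_mem_cons] at h1 hδ
    have hδ0 : 0 ≤ δ := (norm_nonneg d).trans hδ.1
    set P := (l.map (1 - ·)).prod
    set S := l.sum
    calc ‖(1 - d) * P - (1 - (d + S))‖ = ‖(1 - d) * (P - (1 - S)) + d * S‖ := by noncomm_ring
      _ ≤ ‖1 - d‖ * ‖P - (1 - S)‖ + ‖d‖ * ‖S‖ :=
          norm_add_le_of_le (norm_mul_le _ _) (norm_mul_le _ _)
      _ ≤ 1 * (l.length * δ) ^ 2 + δ * (l.length * δ) := by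
          gcongr
          exacts [h1.1, ih h1.2 hδ.2, hδ.1]
      _ ≤ ((d :: l).length * δ) ^ 2 := by
          simp only [List.length_cons]; push_cast; nlinarith [mul_nonneg hδ0 hδ0]

end NormedRing

theorem IsIdempotentElem.smul_one_add_smul_pow {𝕜 A : Type*} [CommRing 𝕜] [Ring A] [Algebra 𝕜 A]
    {e : A} (he : IsIdempotentElem e) (a : 𝕜) (N : ℕ) :
    (a • 1 + (1 - a) • e) ^ N = a ^ N • (1 : A) + (1 - a ^ N) • e := by
  induction N with
  | zero => simp
  | succ N ih =>
    rw [pow_succ, ih]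
    simp only [add_mul, mul_add, smul_mul_smul, one_mul, mul_one, he.eq]
    module

theorem one_sub_div_two_mul_card_mem_Icc (ι : Type*) [Fintype ι] [Nonempty ι] {a : ℝ}
    (ha : a ∈ Set.Icc 0 1) :
    (1 - a) / (2 * Fintype.card ι) ∈ Set.Icc (0 : ℝ) 1 := by
  have hcard : (1 : ℝ) ≤ Fintype.card ι := by exact_mod_cast Fintype.card_pos
  exact ⟨div_nonneg (by linarith [ha.2]) (by positivity),
    (div_le_one (by positivity)).2 (by linarith [ha.1])⟩

namespace Matrix

variable {ι : Type*}

section EdgeLaplacian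

variable [DecidableEq ι]

def edgeLaplacian (s t : ι) : Matrix ι ι ℝ :=
  vecMulVec (Pi.single s 1 - Pi.single t 1) (Pi.single s 1 - Pi.single t 1)

theorem edgeLaplacian_comm (s t : ι) : edgeLaplacian s t = edgeLaplacian t s := by
  rw [edgeLaplacian, edgeLaplacian, ← neg_sub, neg_vecMulVec, vecMulVec_neg, neg_neg]

@[simp]
theorem edgeLaplacian_self (s : ι) : edgeLaplacian s s = 0 := by
  simp [edgeLaplacian]

theorem one_sub_edgeLaplacian (s t : ι) :
    1 - edgeLaplacian s t = (Equiv.swap s t).permMatrix ℝ := by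
  ext i j
  simp only [edgeLaplacian, sub_apply, one_apply, vecMulVec_apply, Pi.sub_apply,
    Pi.single_apply, Equiv.Perm.permMatrix, PEquiv.toMatrix_apply, Equiv.toPEquiv_apply,
    Option.mem_def, Option.some.injEq, Equiv.swap_apply_def]
  by_cases his : i = s <;> by_cases hit : i = t <;> by_cases hjs : j = s <;>
    by_cases hjt : j = t <;> simp_all [eq_comm]

end EdgeLaplacian

variable [Fintype ι]

noncomputable def averagingMatrix (ι : Type*) [Fintype ι] : Matrix ι ι ℝ :=
  of fun _ _ => 1 / (Fintype.card ι : ℝ)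

theorem isIdempotentElem_averagingMatrix : IsIdempotentElem (averagingMatrix ι) := by
  ext i j
  have : Nonempty ι := ⟨i⟩
  simp [averagingMatrix, mul_apply]

variable [DecidableEq ι]

theorem averagingMatrix_mem_rowStochastic : averagingMatrix ι ∈ rowStochastic ℝ ι := by
  refine mem_rowStochastic_iff_sum.2 ⟨fun i j => by simp [averagingMatrix], fun i => ?_⟩
  have : Nonempty ι := ⟨i⟩
  simp [averagingMatrix]

theorem smul_one_add_smul_averagingMatrix_mem_rowStochastic {a : ℝ} (ha : a ∈ Set.Icc 0 1) :
    a • 1 + (1 - a) • averagingMatrix ι ∈ rowStochastic ℝ ι :=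
  convex_rowStochastic (one_mem _) averagingMatrix_mem_rowStochastic ha.1
    (by linarith [ha.2]) (by ring)

theorem sum_edgeLaplacian :
    ∑ p : ι × ι, edgeLaplacian p.1 p.2 = (2 * Fintype.card ι : ℝ) • (1 - averagingMatrix ι) := by
  ext i j
  have : Nonempty ι := ⟨i⟩
  simp only [sum_apply, Fintype.sum_prod_type, edgeLaplacian, vecMulVec_apply, Pi.sub_apply,
    Pi.single_apply]
  rcases eq_or_ne i j with rfl | hij
  · norm_num [mul_sub, Finset.sum_sub_distrib, averagingMatrix]; ring
  · norm_num [mul_sub, Finset.sum_sub_distrib, averagingMatrix, hij]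

theorem one_sub_smul_edgeLaplacian_mem_rowStochastic {c : ℝ} (hc : c ∈ Set.Icc 0 1) (s t : ι) :
    1 - c • edgeLaplacian s t ∈ rowStochastic ℝ ι := by
  have h : 1 - c • edgeLaplacian s t = (1 - c) • 1 + c • (Equiv.swap s t).permMatrix ℝ := by
    rw [← one_sub_edgeLaplacian]; module
  rw [h]
  exact convex_rowStochastic (one_mem _) permMatrix_mem_rowStochastic (by linarith [hc.2]) hc.1
    (by ring)

noncomputable def pinchingSweep (ι : Type*) [Fintype ι] [DecidableEq ι] (c : ℝ) : Matrix ι ι ℝ :=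
  ((Finset.univ : Finset (ι × ι)).toList.map fun p => 1 - c • edgeLaplacian p.1 p.2).prod

theorem pinchingSweep_mem_rowStochastic {c : ℝ} (hc : c ∈ Set.Icc 0 1) :
    pinchingSweep ι c ∈ rowStochastic ℝ ι := by
  refine list_prod_mem fun M hM => ?_
  obtain ⟨p, -, rfl⟩ := List.mem_map.1 hM
  exact one_sub_smul_edgeLaplacian_mem_rowStochastic hc p.1 p.2

end Matrix

section LinftyOpNorm

attribute [local instance] Matrix.linftyOpSeminormedAddCommGroup Matrix.linftyOpNormedRing
  Matrix.linftyOpNormedAlgebra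

namespace Matrix

theorem norm_apply_le_linfty_opNorm {m n α : Type*} [Fintype m] [Fintype n]
    [SeminormedAddCommGroup α] (A : Matrix m n α) (i : m) (j : n) : ‖A i j‖ ≤ ‖A‖ := by
  rw [linfty_opNorm_def, ← coe_nnnorm, NNReal.coe_le_coe]
  exact (Finset.single_le_sum (fun k _ => zero_le) (Finset.mem_univ j)).trans
    (Finset.le_sup (f := fun i => ∑ j, ‖A i j‖₊) (Finset.mem_univ i))

variable {ι : Type*} [Fintype ι] [DecidableEq ι]

theorem linfty_opNorm_le_one_of_mem_rowStochastic {M : Matrix ι ι ℝ}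
    (hM : M ∈ rowStochastic ℝ ι) : ‖M‖ ≤ 1 := by
  rw [linfty_opNorm_def, NNReal.coe_le_one, Finset.sup_le_iff]
  intro i _
  rw [← NNReal.coe_le_one]
  push_cast
  simp_rw [Real.norm_of_nonneg (nonneg_of_mem_rowStochastic hM),
    sum_row_of_mem_rowStochastic hM i, le_refl]

theorem linfty_opNorm_edgeLaplacian_le (s t : ι) : ‖edgeLaplacian s t‖ ≤ 2 := by
  have h1 := linfty_opNorm_le_one_of_mem_rowStochastic (one_mem (rowStochastic ℝ ι))
  have hσ : ‖1 - edgeLaplacian s t‖ ≤ 1 := by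
    rw [one_sub_edgeLaplacian]
    exact linfty_opNorm_le_one_of_mem_rowStochastic permMatrix_mem_rowStochastic
  calc ‖edgeLaplacian s t‖ = ‖1 - (1 - edgeLaplacian s t)‖ := by rw [sub_sub_cancel]
    _ ≤ ‖(1 : Matrix ι ι ℝ)‖ + ‖1 - edgeLaplacian s t‖ := norm_sub_le _ _
    _ ≤ 2 := by linarith

variable [Nonempty ι]

theorem linfty_opNorm_pinchingSweep_sub_le {a : ℝ} (ha : a ∈ Set.Icc 0 1) :
    ‖pinchingSweep ι ((1 - a) / (2 * Fintype.card ι)) - (a • 1 + (1 - a) • averagingMatrix ι)‖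
      ≤ (Fintype.card ι * (1 - a)) ^ 2 := by
  have hc := one_sub_div_two_mul_card_mem_Icc ι ha
  set c := (1 - a) / (2 * Fintype.card ι) with hc_def
  set l := (Finset.univ : Finset (ι × ι)).toList.map fun p => c • edgeLaplacian p.1 p.2
  have hsweep : pinchingSweep ι c = (l.map (1 - ·)).prod := by
    simp [pinchingSweep, l, List.map_map, Function.comp_def]
  have hsum : 1 - l.sum = a • 1 + (1 - a) • averagingMatrix ι := by
    rw [Finset.sum_map_toList, ← Finset.smul_sum, sum_edgeLaplacian, smul_smul,
      show c * (2 * Fintype.card ι) = 1 - a by rw [hc_def]; field_simp]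
    module
  have h1 : ∀ d ∈ l, ‖1 - d‖ ≤ 1 := by
    simp only [l, List.mem_map]
    rintro _ ⟨p, -, rfl⟩
    exact linfty_opNorm_le_one_of_mem_rowStochastic
      (one_sub_smul_edgeLaplacian_mem_rowStochastic hc p.1 p.2)
  have hδ : ∀ d ∈ l, ‖d‖ ≤ 2 * c := by
    simp only [l, List.mem_map]
    rintro _ ⟨p, -, rfl⟩
    rw [norm_smul, Real.norm_of_nonneg hc.1, mul_comm]
    exact mul_le_mul_of_nonneg_right (linfty_opNorm_edgeLaplacian_le p.1 p.2) hc.1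
  calc _ = ‖(l.map (1 - ·)).prod - (1 - l.sum)‖ := by rw [hsweep, hsum]
    _ ≤ (l.length * (2 * c)) ^ 2 := norm_prod_one_sub_sub_one_sub_sum_le h1 hδ
    _ = (Fintype.card ι * (1 - a)) ^ 2 := by
      simp only [l, List.length_map, Finset.length_toList, Finset.card_univ, Fintype.card_prod]
      rw [hc_def]; push_cast; field_simp

theorem linfty_opNorm_pinchingSweep_pow_sub_le {a : ℝ} (ha : a ∈ Set.Icc 0 1) (N : ℕ) :
    ‖pinchingSweep ι ((1 - a) / (2 * Fintype.card ι)) ^ N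
        - (a ^ N • 1 + (1 - a ^ N) • averagingMatrix ι)‖
      ≤ N * (Fintype.card ι * (1 - a)) ^ 2 := by
  have hc := one_sub_div_two_mul_card_mem_Icc ι ha
  rw [← isIdempotentElem_averagingMatrix.smul_one_add_smul_pow]
  refine (norm_pow_sub_pow_le ?_ ?_ N).trans ?_
  · exact linfty_opNorm_le_one_of_mem_rowStochastic (pinchingSweep_mem_rowStochastic hc)
  · exact linfty_opNorm_le_one_of_mem_rowStochastic
      (smul_one_add_smul_averagingMatrix_mem_rowStochastic ha)
  · gcongr
    exact linfty_opNorm_pinchingSweep_sub_le ha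

theorem norm_pinchingSweep_pow_sub_apply_le {a : ℝ} (ha : a ∈ Set.Icc 0 1) (N : ℕ) (i j : ι) :
    ‖(pinchingSweep ι ((1 - a) / (2 * Fintype.card ι)) ^ N
        - (a ^ N • 1 + (1 - a ^ N) • averagingMatrix ι)) i j‖
      ≤ N * (Fintype.card ι * (1 - a)) ^ 2 :=
  (norm_apply_le_linfty_opNorm _ i j).trans (linfty_opNorm_pinchingSweep_pow_sub_le ha N)

end Matrix

end LinftyOpNorm

theorem isPinching_one_sub_smul_edgeLaplacian {n : ℕ} {s t : Fin n} (hst : s < t) {c : ℝ}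
    (hc : c ∈ Set.Icc 0 1) : IsPinching (1 - c • edgeLaplacian s t) := by
  refine ⟨s, t, hst, 1 - c, ⟨by linarith [hc.2], by linarith [hc.1]⟩, ?_⟩
  have hts : t ≠ s := hst.ne'
  ext i j
  simp only [edgeLaplacian, Matrix.sub_apply, Matrix.smul_apply, one_apply, vecMulVec_apply,
    Pi.sub_apply, Pi.single_apply, of_apply, smul_eq_mul]
  by_cases his : i = s <;> by_cases hit : i = t <;> by_cases hjs : j = s <;>
    by_cases hjt : j = t <;> simp_all

def pinchingSubmonoid (n : ℕ) : Submonoid (Matrix (Fin n) (Fin n) ℝ) where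
  carrier := PinchingProducts n
  mul_mem' := by
    rintro _ _ ⟨l₁, h₁, rfl⟩ ⟨l₂, h₂, rfl⟩
    exact ⟨l₁ ++ l₂, fun P hP => (List.mem_append.1 hP).elim (h₁ P) (h₂ P),
      (List.prod_append ..).symm⟩
  one_mem' := ⟨[], by simp, rfl⟩

theorem one_sub_smul_edgeLaplacian_mem_pinchingSubmonoid {n : ℕ} {c : ℝ} (hc : c ∈ Set.Icc 0 1)
    (s t : Fin n) : 1 - c • edgeLaplacian s t ∈ pinchingSubmonoid n := by
  have mem_of_lt {s t : Fin n} (hst : s < t) : 1 - c • edgeLaplacian s t ∈ pinchingSubmonoid n :=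
    ⟨[_], by simpa using isPinching_one_sub_smul_edgeLaplacian hst hc, by simp⟩
  rcases lt_trichotomy s t with hst | rfl | hts
  · exact mem_of_lt hst
  · simp [one_mem]
  · exact edgeLaplacian_comm s t ▸ mem_of_lt hts

theorem pinchingSweep_mem_pinchingSubmonoid {n : ℕ} {c : ℝ} (hc : c ∈ Set.Icc 0 1) :
    pinchingSweep (Fin n) c ∈ pinchingSubmonoid n := by
  refine list_prod_mem fun M hM => ?_
  obtain ⟨p, -, rfl⟩ := List.mem_map.1 hM
  exact one_sub_smul_edgeLaplacian_mem_pinchingSubmonoid hc p.1 p.2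

open Filter in
theorem smul_one_add_smul_averagingMatrix_mem_closure {n : ℕ} [NeZero n] {α : ℝ}
    (hα : α ∈ Set.Ioc 0 1) :
    α • 1 + (1 - α) • averagingMatrix (Fin n) ∈ closure (PinchingProducts n) := by
  obtain ⟨hα0, hα1⟩ := hα
  set a : ℕ → ℝ := fun N => α ^ (N : ℝ)⁻¹
  have ha : ∀ N, a N ∈ Set.Icc 0 1 := fun N =>
    ⟨by positivity, Real.rpow_le_one hα0.le hα1 (by positivity)⟩
  -- `1 - x ≤ -log x` at `x = α ^ (1/N)`
  have hgap : ∀ N : ℕ, N * (1 - a N) ≤ -Real.log α := by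
    intro N
    rcases N.eq_zero_or_pos with rfl | hN
    · simpa using Real.log_nonpos hα0.le hα1
    have h := Real.log_le_sub_one_of_pos (Real.rpow_pos_of_pos hα0 (N : ℝ)⁻¹)
    rw [Real.log_rpow hα0] at h
    calc N * (1 - a N) ≤ N * -((N : ℝ)⁻¹ * Real.log α) := by gcongr; linarith
      _ = -Real.log α := by field_simp
  refine mem_closure_of_tendsto (b := atTop)
    (f := fun N => pinchingSweep (Fin n) ((1 - a N) / (2 * Fintype.card (Fin n))) ^ N) ?_
    (Eventually.of_forall fun N => pow_mem (pinchingSweep_mem_pinchingSubmonoid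
      (one_sub_div_two_mul_card_mem_Icc (Fin n) (ha N))) N)
  refine tendsto_pi_nhds.2 fun i => tendsto_pi_nhds.2 fun j => ?_
  rw [← tendsto_sub_nhds_zero_iff]
  refine squeeze_zero_norm' ?_ (tendsto_const_div_atTop_nhds_zero_nat
    (Fintype.card (Fin n) ^ 2 * (-Real.log α) ^ 2))
  filter_upwards [eventually_ne_atTop 0] with N hN
  have h := norm_pinchingSweep_pow_sub_apply_le (ha N) N i j
  rw [Real.rpow_inv_natCast_pow hα0.le hN] at h
  have hN' : (0 : ℝ) < N := by positivity
  refine h.trans ?_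
  calc (N : ℝ) * (Fintype.card (Fin n) * (1 - a N)) ^ 2
      = Fintype.card (Fin n) ^ 2 * (N * (1 - a N)) ^ 2 / N := by field_simp
    _ ≤ Fintype.card (Fin n) ^ 2 * (-Real.log α) ^ 2 / N := by
      have : 0 ≤ N * (1 - a N) := mul_nonneg hN'.le (by linarith [(ha N).2])
      gcongr
      exact hgap N

/-- For every `α ∈ [0,1]`, the matrix `αIₙ + (1−α)Jₙ` (where `Jₙ` has all entries `1/n`)
lies in the closure of `ℙ_n`. -/
theorem stmt7 {n : ℕ} (α : ℝ) (hα : α ∈ Set.Icc (0 : ℝ) 1) :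
    α • (1 : Matrix (Fin n) (Fin n) ℝ) +
        (1 - α) • Matrix.of (fun _ _ => (1 / n : ℝ)) ∈
      closure (PinchingProducts n) := by
  rcases n.eq_zero_or_pos with rfl | hn
  · rw [Subsingleton.elim (α • _ + _) (1 : Matrix (Fin 0) (Fin 0) ℝ)]
    exact subset_closure (one_mem (pinchingSubmonoid 0))
  have : NeZero n := ⟨hn.ne'⟩
  have hclosed : IsClosed {a : ℝ | a • 1 + (1 - a) • averagingMatrix (Fin n) ∈
      closure (PinchingProducts n)} :=
    isClosed_closure.preimage (by fun_prop)
  rw [← closure_Ioc zero_ne_one] at hα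
  simpa [averagingMatrix] using
    hclosed.closure_subset_iff.2 (fun a ha => smul_one_add_smul_averagingMatrix_mem_closure ha) hα
end

section
/- For n = 2, let D = diag(1,−1) and let L : H_2 → ℝ² be any linear map, written as L(X) = (tr(PX), tr(QX)) for some Hermitian matrices P, Q ∈ H_2. Then W_L(D) = 2·W(P,Q) − (tr P, tr Q), where W(P,Q) := {(x*Px, x*Qx) : x ∈ ℂ², x*x = 1} is the joint numerical range of (P,Q); in particular W_L(D) is convex and contains the origin (0,0). -/
open Matrix

/-- The `L`-numerical range of `A ∈ H_2` for the linear map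
`L(X) = (tr(PX), tr(QX)) : H_2 → ℝ²`. -/
noncomputable def WL2 (P Q : Matrix (Fin 2) (Fin 2) ℂ)
    (A : Matrix (Fin 2) (Fin 2) ℂ) : Set (Fin 2 → ℝ) :=
  {y | ∃ U ∈ Matrix.unitaryGroup (Fin 2) ℂ,
    y = ![(Matrix.trace (P * (Uᴴ * A * U))).re, (Matrix.trace (Q * (Uᴴ * A * U))).re]}

/-- The joint numerical range `W(P,Q) = {(x*Px, x*Qx) : x ∈ ℂ², x*x = 1}`. -/
noncomputable def JointNumericalRange (P Q : Matrix (Fin 2) (Fin 2) ℂ) :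
    Set (Fin 2 → ℝ) :=
  {y | ∃ x : Fin 2 → ℂ, star x ⬝ᵥ x = 1 ∧
    y = ![(star x ⬝ᵥ (P *ᵥ x)).re, (star x ⬝ᵥ (Q *ᵥ x)).re]}

/-! ### Auxiliary machinery -/

section Aux

/-- Real coefficients of the linear functional `v ↦ Re (tr (R · M v))`. -/
noncomputable def coeffs (R : Matrix (Fin 2) (Fin 2) ℂ) : Fin 3 → ℝ :=
  ![(R 0 0).re - (R 1 1).re, (R 0 1).re + (R 1 0).re, (R 0 1).im - (R 1 0).im]

/-- The point of the (Bloch) 2-sphere associated to a unit vector `x ∈ ℂ²`. -/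
noncomputable def xv (x : Fin 2 → ℂ) : Fin 3 → ℝ :=
  ![2 * Complex.normSq (x 0) - 1, 2 * (x 0 * starRingEnd ℂ (x 1)).re,
    2 * (x 0 * starRingEnd ℂ (x 1)).im]

/-- The real-linear map `ℝ³ → ℝ²` underlying the `L`-numerical range of `diag(1,-1)`. -/
noncomputable def Tmap (P Q : Matrix (Fin 2) (Fin 2) ℂ) : (Fin 3 → ℝ) →ₗ[ℝ] (Fin 2 → ℝ) where
  toFun v := ![∑ i, coeffs P i * v i, ∑ i, coeffs Q i * v i]
  map_add' u v := by
    funext j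
    fin_cases j <;> simp [Fin.sum_univ_three] <;> ring
  map_smul' c v := by
    funext j
    fin_cases j <;> simp [Fin.sum_univ_three] <;> ring

lemma Tmap_apply0 (P Q : Matrix (Fin 2) (Fin 2) ℂ) (v : Fin 3 → ℝ) :
    Tmap P Q v 0 = ∑ i, coeffs P i * v i := rfl

lemma Tmap_apply1 (P Q : Matrix (Fin 2) (Fin 2) ℂ) (v : Fin 3 → ℝ) :
    Tmap P Q v 1 = ∑ i, coeffs Q i * v i := rfl

lemma vec2_ext {a b : Fin 2 → ℝ} (h0 : a 0 = b 0) (h1 : a 1 = b 1) : a = b := by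
  funext j
  fin_cases j
  · exact h0
  · exact h1

lemma key' (U R : Matrix (Fin 2) (Fin 2) ℂ) :
    Matrix.trace (R * (Uᴴ * (Matrix.diagonal ![1, -1]) * U)) =
      2 * (star (fun i => starRingEnd ℂ (U 0 i)) ⬝ᵥ (R *ᵥ fun i => starRingEnd ℂ (U 0 i)))
        - Matrix.trace (R * (Uᴴ * U)) := by
  simp [Matrix.trace, Matrix.mul_apply, Matrix.diagonal, dotProduct, Matrix.mulVec,
    Fin.sum_univ_two, Matrix.conjTranspose_apply]
  ring

lemma twomul (R : Matrix (Fin 2) (Fin 2) ℂ) (x : Fin 2 → ℂ) (hx : star x ⬝ᵥ x = 1) :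
    ∑ i, coeffs R i * xv x i = 2 * (star x ⬝ᵥ (R *ᵥ x)).re - (Matrix.trace R).re := by
  have h := congrArg Complex.re hx
  simp [dotProduct, Fin.sum_univ_two, Complex.add_re, Complex.mul_re] at h
  simp [coeffs, xv, dotProduct, Matrix.mulVec, Matrix.trace, Fin.sum_univ_two,
    Fin.sum_univ_three, Complex.normSq_apply, Complex.add_re, Complex.mul_re, Complex.mul_im]
  linear_combination (-2 * (R 1 1).re) * h

lemma xv_unit (x : Fin 2 → ℂ) (hx : star x ⬝ᵥ x = 1) :
    (xv x 0)^2 + (xv x 1)^2 + (xv x 2)^2 = 1 := by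
  have h := congrArg Complex.re hx
  simp [dotProduct, Fin.sum_univ_two, Complex.add_re, Complex.mul_re] at h
  simp [xv, Complex.normSq_apply, Complex.mul_re, Complex.mul_im]
  nlinarith [h]

lemma exists_unit_ker (P Q : Matrix (Fin 2) (Fin 2) ℂ) :
    ∃ k : Fin 3 → ℝ, (k 0)^2 + (k 1)^2 + (k 2)^2 = 1 ∧ Tmap P Q k = 0 := by
  have hni : ¬ Function.Injective (Tmap P Q) := by
    intro h
    have := LinearMap.finrank_le_finrank_of_injective h
    simp [Module.finrank_pi] at this
  have hker : LinearMap.ker (Tmap P Q) ≠ ⊥ := by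
    intro h
    exact hni (LinearMap.ker_eq_bot.mp h)
  obtain ⟨u, hu, hu0⟩ := (Submodule.ne_bot_iff _).mp hker
  have hn2 : 0 < (u 0)^2 + (u 1)^2 + (u 2)^2 := by
    rcases lt_or_eq_of_le (by positivity : (0:ℝ) ≤ (u 0)^2 + (u 1)^2 + (u 2)^2) with h | h
    · exact h
    · exfalso; apply hu0
      have h0 : u 0 = 0 := by nlinarith [sq_nonneg (u 0), sq_nonneg (u 1), sq_nonneg (u 2)]
      have h1 : u 1 = 0 := by nlinarith [sq_nonneg (u 0), sq_nonneg (u 1), sq_nonneg (u 2)]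
      have h2 : u 2 = 0 := by nlinarith [sq_nonneg (u 0), sq_nonneg (u 1), sq_nonneg (u 2)]
      funext i
      fin_cases i
      · exact h0
      · exact h1
      · exact h2
  set r := Real.sqrt ((u 0)^2 + (u 1)^2 + (u 2)^2) with hr
  have hrpos : 0 < r := Real.sqrt_pos.mpr hn2
  have hr2 : r^2 = (u 0)^2 + (u 1)^2 + (u 2)^2 := Real.sq_sqrt hn2.le
  refine ⟨r⁻¹ • u, ?_, ?_⟩
  · simp only [Pi.smul_apply, smul_eq_mul]
    field_simp
    linarith [hr2]
  · rw [LinearMap.map_smul, LinearMap.mem_ker.mp hu]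
    simp

lemma ball_to_sphere (P Q : Matrix (Fin 2) (Fin 2) ℂ)
    (k : Fin 3 → ℝ) (hk : (k 0)^2 + (k 1)^2 + (k 2)^2 = 1) (hk0 : Tmap P Q k = 0)
    (w : Fin 3 → ℝ) (hw : (w 0)^2 + (w 1)^2 + (w 2)^2 ≤ 1) :
    ∃ u : Fin 3 → ℝ, (u 0)^2 + (u 1)^2 + (u 2)^2 = 1 ∧ Tmap P Q u = Tmap P Q w := by
  set d := w 0 * k 0 + w 1 * k 1 + w 2 * k 2 with hd
  set t := -d + Real.sqrt (d^2 + 1 - ((w 0)^2 + (w 1)^2 + (w 2)^2)) with ht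
  have hnn : 0 ≤ d^2 + 1 - ((w 0)^2 + (w 1)^2 + (w 2)^2) := by nlinarith [sq_nonneg d]
  have hsq := Real.sq_sqrt hnn
  refine ⟨w + t • k, ?_, ?_⟩
  · simp only [Pi.add_apply, Pi.smul_apply, smul_eq_mul]
    linear_combination (t^2) * hk + hsq
  · rw [map_add, LinearMap.map_smul, hk0]
    simp

lemma sphere_to_x (v : Fin 3 → ℝ) (hv : (v 0)^2 + (v 1)^2 + (v 2)^2 = 1) :
    ∃ x : Fin 2 → ℂ, star x ⬝ᵥ x = 1 ∧ xv x = v := by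
  by_cases hva : 1 + v 0 ≤ 0
  · have h0 : v 0 = -1 := by nlinarith [sq_nonneg (v 1), sq_nonneg (v 2), sq_nonneg (1 + v 0)]
    have h1 : v 1 = 0 := by nlinarith [sq_nonneg (v 2)]
    have h2 : v 2 = 0 := by nlinarith [sq_nonneg (v 1)]
    refine ⟨![0, 1], by simp [dotProduct, Fin.sum_univ_two], ?_⟩
    funext i
    fin_cases i <;> simp [xv, h0, h1, h2]
  · push_neg at hva
    set s := Real.sqrt (2 * (1 + v 0)) with hs
    have hspos : 0 < s := Real.sqrt_pos.mpr (by linarith)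
    have hs2 : s^2 = 2 * (1 + v 0) := Real.sq_sqrt (by linarith)
    have hss : s * s = 2 * (1 + v 0) := by nlinarith [hs2]
    refine ⟨![(((1 + v 0)/s : ℝ) : ℂ), (((v 1)/s : ℝ) : ℂ) - (((v 2)/s : ℝ) : ℂ) * Complex.I],
      ?_, ?_⟩
    · simp only [dotProduct, Fin.sum_univ_two, Pi.star_apply, Matrix.cons_val_zero,
        Matrix.cons_val_one, Matrix.head_cons]
      rw [Complex.ext_iff]
      constructor
      · simp [Complex.add_re, Complex.mul_re, Complex.mul_im, Complex.sub_re, Complex.sub_im]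
        field_simp
        nlinarith [hs2, hss, hv]
      · simp [Complex.add_im, Complex.mul_re, Complex.mul_im, Complex.sub_re, Complex.sub_im]
        ring
    · funext i
      fin_cases i
      · simp [xv, Complex.normSq_apply, Complex.mul_re, Complex.mul_im, Complex.sub_re,
          Complex.sub_im]
        field_simp
        nlinarith [hs2, hss, hv]
      · simp [xv, Complex.normSq_apply, Complex.mul_re, Complex.mul_im, Complex.sub_re,
          Complex.sub_im]
        field_simp
        first
        | linear_combination (4*v 1) * hs2
        | linear_combination (-4*v 1) * hs2
        | linear_combination (2*v 1) * hss
        | linear_combination (-2*v 1) * hss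
        | linear_combination (v 1) * hss
        | linear_combination (-v 1) * hss
      · simp [xv, Complex.normSq_apply, Complex.mul_re, Complex.mul_im, Complex.sub_re,
          Complex.sub_im]
        field_simp
        first
        | linear_combination (4*v 2) * hs2
        | linear_combination (-4*v 2) * hs2
        | linear_combination (2*v 2) * hss
        | linear_combination (-2*v 2) * hss
        | linear_combination (v 2) * hss
        | linear_combination (-v 2) * hss

lemma x_to_U (x : Fin 2 → ℂ) (hx : star x ⬝ᵥ x = 1) :
    ∃ U ∈ Matrix.unitaryGroup (Fin 2) ℂ, (fun i => starRingEnd ℂ (U 0 i)) = x := by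
  have hx' : starRingEnd ℂ (x 0) * x 0 + starRingEnd ℂ (x 1) * x 1 = 1 := by
    simpa [dotProduct, Fin.sum_univ_two] using hx
  refine ⟨!![starRingEnd ℂ (x 0), starRingEnd ℂ (x 1); -(x 1), x 0], ?_, ?_⟩
  · rw [Matrix.mem_unitaryGroup_iff]
    ext i j
    fin_cases i <;> fin_cases j <;>
      simp [Matrix.mul_apply, Fin.sum_univ_two, Matrix.conjTranspose_apply] <;>
      first
      | linear_combination hx'
      | linear_combination -hx'
      | ring1
  · funext i
    fin_cases i <;> simp

end Aux

/-- For `D = diag(1,−1)` and any linear `L : H_2 → ℝ²`, `L(X) = (tr(PX), tr(QX))` with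
`P, Q` Hermitian, one has `W_L(D) = 2·W(P,Q) − (tr P, tr Q)`; in particular `W_L(D)` is
convex and contains the origin. -/
theorem stmt12 (P Q : Matrix (Fin 2) (Fin 2) ℂ)
    (hP : P.IsHermitian) (hQ : Q.IsHermitian) :
    WL2 P Q (Matrix.diagonal ![1, -1]) =
        (fun q => (2 : ℝ) • q - ![(Matrix.trace P).re, (Matrix.trace Q).re]) ''
          JointNumericalRange P Q ∧
      Convex ℝ (WL2 P Q (Matrix.diagonal ![1, -1])) ∧
      (0 : Fin 2 → ℝ) ∈ WL2 P Q (Matrix.diagonal ![1, -1]) := by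
  have hA : WL2 P Q (Matrix.diagonal ![1, -1]) =
      (fun q => (2 : ℝ) • q - ![(Matrix.trace P).re, (Matrix.trace Q).re]) ''
        JointNumericalRange P Q := by
    apply Set.Subset.antisymm
    · rintro y ⟨U, hU, rfl⟩
      have h1 : U * star U = 1 := Matrix.mem_unitaryGroup_iff.mp hU
      have h2 : star U * U = 1 := Matrix.mem_unitaryGroup_iff'.mp hU
      set x : Fin 2 → ℂ := fun i => starRingEnd ℂ (U 0 i) with hxdef
      have hx : star x ⬝ᵥ x = 1 := by
        have h10 := congrFun (congrFun h1 0) 0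
        simp [Matrix.mul_apply, Fin.sum_univ_two, Matrix.conjTranspose_apply] at h10
        simp [hxdef, dotProduct, Fin.sum_univ_two]
        linear_combination h10
      have h2' : Uᴴ * U = 1 := h2
      refine ⟨![(star x ⬝ᵥ (P *ᵥ x)).re, (star x ⬝ᵥ (Q *ᵥ x)).re], ⟨x, hx, rfl⟩, ?_⟩
      have hPU := key' U P
      have hQU := key' U Q
      rw [h2', mul_one, ← hxdef] at hPU hQU
      apply vec2_ext
      · simp only [Matrix.cons_val_zero, Pi.sub_apply, Pi.smul_apply, smul_eq_mul]
        rw [hPU]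
        simp [Complex.sub_re]
      · simp only [Matrix.cons_val_one, Matrix.head_cons, Pi.sub_apply, Pi.smul_apply,
          smul_eq_mul]
        rw [hQU]
        simp [Complex.sub_re]
    · rintro y ⟨q, ⟨x, hx, rfl⟩, rfl⟩
      obtain ⟨U, hU, hUx⟩ := x_to_U x hx
      have h2 : star U * U = 1 := Matrix.mem_unitaryGroup_iff'.mp hU
      have h2' : Uᴴ * U = 1 := h2
      refine ⟨U, hU, ?_⟩
      have hPU := key' U P
      have hQU := key' U Q
      rw [h2', mul_one, hUx] at hPU hQU
      apply vec2_ext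
      · simp only [Matrix.cons_val_zero, Pi.sub_apply, Pi.smul_apply, smul_eq_mul]
        rw [hPU]
        simp [Complex.sub_re]
      · simp only [Matrix.cons_val_one, Matrix.head_cons, Pi.sub_apply, Pi.smul_apply,
          smul_eq_mul]
        rw [hQU]
        simp [Complex.sub_re]
  obtain ⟨k, hk1, hk0⟩ := exists_unit_ker P Q
  have hB : (fun q => (2 : ℝ) • q - ![(Matrix.trace P).re, (Matrix.trace Q).re]) ''
        JointNumericalRange P Q =
      (Tmap P Q) '' {v : Fin 3 → ℝ | (v 0)^2 + (v 1)^2 + (v 2)^2 = 1} := by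
    apply Set.Subset.antisymm
    · rintro y ⟨q, ⟨x, hx, rfl⟩, rfl⟩
      refine ⟨xv x, xv_unit x hx, ?_⟩
      apply vec2_ext
      · rw [Tmap_apply0, twomul P x hx]
        simp
      · rw [Tmap_apply1, twomul Q x hx]
        simp
    · rintro y ⟨v, hv, rfl⟩
      obtain ⟨x, hx, hxv⟩ := sphere_to_x v hv
      refine ⟨![(star x ⬝ᵥ (P *ᵥ x)).re, (star x ⬝ᵥ (Q *ᵥ x)).re], ⟨x, hx, rfl⟩, ?_⟩
      apply vec2_ext
      · rw [Tmap_apply0, ← hxv, twomul P x hx]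
        simp
      · rw [Tmap_apply1, ← hxv, twomul Q x hx]
        simp
  have hC : (Tmap P Q) '' {v : Fin 3 → ℝ | (v 0)^2 + (v 1)^2 + (v 2)^2 = 1} =
      (Tmap P Q) '' {v : Fin 3 → ℝ | (v 0)^2 + (v 1)^2 + (v 2)^2 ≤ 1} := by
    apply Set.Subset.antisymm
    · exact Set.image_mono (fun v hv => le_of_eq hv)
    · rintro y ⟨w, hw, rfl⟩
      obtain ⟨u, hu1, hu2⟩ := ball_to_sphere P Q k hk1 hk0 w hw
      exact ⟨u, hu1, hu2⟩
  have hball : Convex ℝ {v : Fin 3 → ℝ | (v 0)^2 + (v 1)^2 + (v 2)^2 ≤ 1} := by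
    intro v hv w hw a b ha hb hab
    simp only [Set.mem_setOf_eq, Pi.add_apply, Pi.smul_apply, smul_eq_mul] at *
    nlinarith [mul_nonneg (mul_nonneg ha hb) (sq_nonneg (v 0 - w 0)),
      mul_nonneg (mul_nonneg ha hb) (sq_nonneg (v 1 - w 1)),
      mul_nonneg (mul_nonneg ha hb) (sq_nonneg (v 2 - w 2)),
      mul_le_mul_of_nonneg_left hv ha, mul_le_mul_of_nonneg_left hw hb,
      mul_nonneg ha hb]
  refine ⟨hA, ?_, ?_⟩
  · rw [hA, hB, hC]
    exact hball.linear_image (Tmap P Q)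
  · rw [hA, hB, hC]
    exact ⟨0, by norm_num, by simp⟩
end

section
/- Let n > 2 and let P' be an n×n complex Hermitian matrix. Then there exist a unitary matrix V ∈ U_n and a real number α such that the leading 2×2 principal submatrix of VP'V* equals α·I₂ (i.e., (VP'V*)₁₁ = (VP'V*)₂₂ = α and (VP'V*)₁₂ = (VP'V*)₂₁ = 0). -/
open Matrix

/-- Rotation (with cosine `x`, sine `y`) in the plane spanned by
coordinates `i` and `k`, identity elsewhere. -/
def rot3 {n : ℕ} (i k : Fin n) (x y : ℝ) : Matrix (Fin n) (Fin n) ℂ :=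
  Matrix.of fun a b =>
    if a = i then (if b = i then (x : ℂ) else if b = k then (y : ℂ) else 0)
    else if a = k then (if b = i then (-(y : ℂ)) else if b = k then (x : ℂ) else 0)
    else if a = b then 1 else 0

section EntryLemmas

variable {n : ℕ} {i k : Fin n} {x y : ℝ}

lemma rot3_ii : rot3 i k x y i i = (x : ℂ) := by simp [rot3]

lemma rot3_ik (hik : i ≠ k) : rot3 i k x y i k = (y : ℂ) := by
  simp [rot3, Ne.symm hik]

lemma rot3_ki (hik : i ≠ k) : rot3 i k x y k i = -(y : ℂ) := by
  simp [rot3, Ne.symm hik]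

lemma rot3_kk (hik : i ≠ k) : rot3 i k x y k k = (x : ℂ) := by
  simp [rot3, Ne.symm hik]

lemma rot3_irow {c : Fin n} (hci : c ≠ i) (hck : c ≠ k) : rot3 i k x y i c = 0 := by
  simp [rot3, hci, hck]

lemma rot3_krow {c : Fin n} (hci : c ≠ i) (hck : c ≠ k) : rot3 i k x y k c = 0 := by
  by_cases h : k = i
  · simp [rot3, h, hci, hck]
  · simp [rot3, h, hci, hck]

lemma rot3_orow {a c : Fin n} (hai : a ≠ i) (hak : a ≠ k) :
    rot3 i k x y a c = if a = c then 1 else 0 := by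
  simp [rot3, hai, hak]

lemma rot3_oi {a : Fin n} (hai : a ≠ i) (hak : a ≠ k) : rot3 i k x y a i = 0 := by
  rw [rot3_orow hai hak, if_neg hai]

lemma rot3_ok {a : Fin n} (hai : a ≠ i) (hak : a ≠ k) : rot3 i k x y a k = 0 := by
  rw [rot3_orow hai hak, if_neg hak]

end EntryLemmas

lemma rot3_mem {n : ℕ} {i k : Fin n} (hik : i ≠ k) {x y : ℝ} (hxy : x ^ 2 + y ^ 2 = 1) :
    rot3 i k x y ∈ Matrix.unitaryGroup (Fin n) ℂ := by
  have hx2 : (x : ℂ) * x + (y : ℂ) * y = 1 := by norm_cast; linear_combination hxy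
  rw [Matrix.mem_unitaryGroup_iff]
  ext a b
  rw [Matrix.mul_apply]
  simp only [Matrix.star_apply, Matrix.one_apply]
  by_cases hai : a = i
  · rw [hai]
    by_cases hbi : b = i
    · rw [hbi]
      rw [Fintype.sum_eq_add i k hik (by
        intro c hc
        rw [rot3_irow hc.1 hc.2, zero_mul])]
      rw [rot3_ii, rot3_ik hik, if_pos rfl, Complex.star_def, Complex.conj_ofReal,
        Complex.conj_ofReal, hx2]
    · by_cases hbk : b = k
      · rw [hbk]
        rw [Fintype.sum_eq_add i k hik (by
          intro c hc
          rw [rot3_irow hc.1 hc.2, zero_mul])]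
        rw [rot3_ii, rot3_ik hik, rot3_ki hik, rot3_kk hik, if_neg hik,
          Complex.star_def, map_neg, Complex.conj_ofReal, Complex.conj_ofReal]
        ring
      · rw [Fintype.sum_eq_add i k hik (by
          intro c hc
          rw [rot3_irow hc.1 hc.2, zero_mul])]
        rw [rot3_oi hbi hbk, rot3_ok hbi hbk, if_neg (fun h => hbi h.symm)]
        simp
  · by_cases hak : a = k
    · rw [hak]
      by_cases hbi : b = i
      · rw [hbi]
        rw [Fintype.sum_eq_add i k hik (by
          intro c hc
          rw [rot3_krow hc.1 hc.2, zero_mul])]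
        rw [rot3_ki hik, rot3_kk hik, rot3_ii, rot3_ik hik,
          if_neg (fun h => hik h.symm), Complex.star_def, Complex.conj_ofReal,
          Complex.conj_ofReal]
        ring
      · by_cases hbk : b = k
        · rw [hbk]
          rw [Fintype.sum_eq_add i k hik (by
            intro c hc
            rw [rot3_krow hc.1 hc.2, zero_mul])]
          rw [rot3_ki hik, rot3_kk hik, if_pos rfl, Complex.star_def, map_neg,
            Complex.conj_ofReal, Complex.conj_ofReal, ← hx2]
          ring
        · rw [Fintype.sum_eq_add i k hik (by
            intro c hc
            rw [rot3_krow hc.1 hc.2, zero_mul])]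
          rw [rot3_oi hbi hbk, rot3_ok hbi hbk, if_neg (fun h => hbk h.symm)]
          simp
    · rw [Fintype.sum_eq_single a (by
        intro c hc
        rw [rot3_orow hai hak, if_neg (fun h => hc h.symm), zero_mul])]
      rw [rot3_orow hai hak, if_pos rfl, one_mul]
      by_cases hbi : b = i
      · rw [hbi, rot3_irow hai hak, star_zero, if_neg (hbi ▸ hai)]
      · by_cases hbk : b = k
        · rw [hbk, rot3_krow hai hak, star_zero, if_neg (hbk ▸ hak)]
        · rw [rot3_orow hbi hbk]
          by_cases hab : a = b
          · rw [if_pos hab.symm, if_pos hab]; simp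
          · rw [if_neg (fun h => hab h.symm), if_neg hab, star_zero]

lemma conj_diag_entry {n : ℕ} (R : Matrix (Fin n) (Fin n) ℂ) (d : Fin n → ℂ) (a b : Fin n) :
    (R * diagonal d * Rᴴ) a b = ∑ c, R a c * d c * star (R b c) := by
  rw [Matrix.mul_apply]
  simp only [Matrix.mul_diagonal, Matrix.conjTranspose_apply]

lemma rot3_conj_A {n : ℕ} {i k : Fin n} (hik : i ≠ k) (x y : ℝ) (d : Fin n → ℝ) :
    (rot3 i k x y * diagonal (fun c => ((d c : ℝ) : ℂ)) * (rot3 i k x y)ᴴ) i i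
      = ((x ^ 2 * d i + y ^ 2 * d k : ℝ) : ℂ) := by
  rw [conj_diag_entry]
  rw [Fintype.sum_eq_add i k hik (by
    intro c hc
    rw [rot3_irow hc.1 hc.2, zero_mul, zero_mul])]
  rw [rot3_ii, rot3_ik hik, Complex.star_def, Complex.conj_ofReal, Complex.conj_ofReal]
  push_cast
  ring

lemma rot3_conj_B {n : ℕ} {i k : Fin n} (x y : ℝ) (d : Fin n → ℝ) {a : Fin n}
    (hai : a ≠ i) (hak : a ≠ k) :
    (rot3 i k x y * diagonal (fun c => ((d c : ℝ) : ℂ)) * (rot3 i k x y)ᴴ) a a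
      = ((d a : ℝ) : ℂ) := by
  rw [conj_diag_entry]
  rw [Fintype.sum_eq_single a (by
    intro c hc
    rw [rot3_orow hai hak, if_neg (fun h => hc h.symm), zero_mul, zero_mul])]
  rw [rot3_orow hai hak, if_pos rfl]
  simp

lemma rot3_conj_C1 {n : ℕ} {i k : Fin n} (x y : ℝ) (d : Fin n → ℝ) {a : Fin n}
    (hai : a ≠ i) (hak : a ≠ k) :
    (rot3 i k x y * diagonal (fun c => ((d c : ℝ) : ℂ)) * (rot3 i k x y)ᴴ) i a = 0 := by
  rw [conj_diag_entry]
  rw [Finset.sum_eq_zero]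
  intro c _
  by_cases hc : c = a
  · rw [hc, rot3_irow hai hak, zero_mul, zero_mul]
  · rw [rot3_orow hai hak, if_neg (fun h => hc h.symm), star_zero, mul_zero]

lemma rot3_conj_C2 {n : ℕ} {i k : Fin n} (x y : ℝ) (d : Fin n → ℝ) {a : Fin n}
    (hai : a ≠ i) (hak : a ≠ k) :
    (rot3 i k x y * diagonal (fun c => ((d c : ℝ) : ℂ)) * (rot3 i k x y)ᴴ) a i = 0 := by
  rw [conj_diag_entry]
  rw [Finset.sum_eq_zero]
  intro c _
  by_cases hc : c = a
  · rw [hc, rot3_irow hai hak, star_zero, mul_zero]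
  · rw [rot3_orow hai hak, if_neg (fun h => hc h.symm), zero_mul, zero_mul]

lemma conj_basis_entry {n : ℕ} (S M : Matrix (Fin n) (Fin n) ℂ) (a b p q : Fin n)
    (hSa : ∀ c, S a c = if c = p then 1 else 0)
    (hSb : ∀ c, S b c = if c = q then 1 else 0) :
    (S * M * Sᴴ) a b = M p q := by
  rw [Matrix.mul_apply]
  rw [Fintype.sum_eq_single q (by
    intro c hc
    simp [Matrix.conjTranspose_apply, hSb c, hc])]
  rw [Matrix.mul_apply]
  rw [Fintype.sum_eq_single p (by
    intro c hc
    simp [hSa c, hc])]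
  simp [hSa p, hSb q, Matrix.conjTranspose_apply]

lemma exists_convex {a b c : ℝ} (h : a ≤ b ∧ b ≤ c ∨ c ≤ b ∧ b ≤ a) :
    ∃ x y : ℝ, x ^ 2 + y ^ 2 = 1 ∧ x ^ 2 * a + y ^ 2 * c = b := by
  wlog hac : a ≤ c with H
  · obtain ⟨x, y, h1, h2⟩ := H h.symm (le_of_not_ge hac)
    exact ⟨y, x, by linarith, by linarith⟩
  have hab : a ≤ b := by rcases h with ⟨h1, h2⟩ | ⟨h1, h2⟩ <;> linarith
  have hbc : b ≤ c := by rcases h with ⟨h1, h2⟩ | ⟨h1, h2⟩ <;> linarith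
  rcases eq_or_lt_of_le hac with rfl | hlt
  · exact ⟨1, 0, by norm_num, by nlinarith⟩
  · set t : ℝ := (b - a) / (c - a) with ht
    have ht0 : 0 ≤ t := div_nonneg (by linarith) (by linarith)
    have ht1 : t ≤ 1 := by
      rw [div_le_one (by linarith)]; linarith
    refine ⟨Real.sqrt (1 - t), Real.sqrt t, ?_, ?_⟩
    · rw [Real.sq_sqrt (by linarith), Real.sq_sqrt ht0]; ring
    · rw [Real.sq_sqrt (by linarith), Real.sq_sqrt ht0]
      have h2 : t * (c - a) = b - a := div_mul_cancel₀ _ (by linarith)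
      nlinarith [h2]

lemma exists_median (a b c : ℝ) :
    ∃ x y : ℝ, x ^ 2 + y ^ 2 = 1 ∧
      (x ^ 2 * a + y ^ 2 * c = b ∨ x ^ 2 * b + y ^ 2 * c = a ∨ x ^ 2 * a + y ^ 2 * b = c) := by
  rcases le_total a b with hab | hab <;> rcases le_total b c with hbc | hbc <;>
    rcases le_total a c with hac | hac
  · obtain ⟨x, y, h1, h2⟩ := exists_convex (Or.inl ⟨hab, hbc⟩); exact ⟨x, y, h1, Or.inl h2⟩
  · obtain ⟨x, y, h1, h2⟩ := exists_convex (Or.inl ⟨hab, hbc⟩); exact ⟨x, y, h1, Or.inl h2⟩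
  · obtain ⟨x, y, h1, h2⟩ := exists_convex (a := a) (b := c) (c := b) (Or.inl ⟨hac, hbc⟩)
    exact ⟨x, y, h1, Or.inr (Or.inr h2)⟩
  · obtain ⟨x, y, h1, h2⟩ := exists_convex (a := b) (b := a) (c := c) (Or.inr ⟨hac, hab⟩)
    exact ⟨x, y, h1, Or.inr (Or.inl h2)⟩
  · obtain ⟨x, y, h1, h2⟩ := exists_convex (a := b) (b := a) (c := c) (Or.inl ⟨hab, hac⟩)
    exact ⟨x, y, h1, Or.inr (Or.inl h2)⟩
  · obtain ⟨x, y, h1, h2⟩ := exists_convex (a := a) (b := c) (c := b) (Or.inr ⟨hbc, hac⟩)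
    exact ⟨x, y, h1, Or.inr (Or.inr h2)⟩
  · obtain ⟨x, y, h1, h2⟩ := exists_convex (Or.inr ⟨hbc, hab⟩); exact ⟨x, y, h1, Or.inl h2⟩
  · obtain ⟨x, y, h1, h2⟩ := exists_convex (Or.inr ⟨hbc, hab⟩); exact ⟨x, y, h1, Or.inl h2⟩

/-- For `n > 2`, every `n × n` Hermitian matrix `P'` is unitarily similar to a matrix whose
leading 2×2 principal submatrix is `α·I₂` for some real `α`. -/
theorem stmt18 {n : ℕ} (hn : 2 < n) (P' : Matrix (Fin n) (Fin n) ℂ)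
    (hP' : P'.IsHermitian) :
    ∃ V ∈ Matrix.unitaryGroup (Fin n) ℂ, ∃ α : ℝ,
      (V * P' * Vᴴ) ⟨0, by omega⟩ ⟨0, by omega⟩ = (α : ℂ) ∧
      (V * P' * Vᴴ) ⟨1, by omega⟩ ⟨1, by omega⟩ = (α : ℂ) ∧
      (V * P' * Vᴴ) ⟨0, by omega⟩ ⟨1, by omega⟩ = 0 ∧
      (V * P' * Vᴴ) ⟨1, by omega⟩ ⟨0, by omega⟩ = 0 := by
  classical
  set i0 : Fin n := ⟨0, by omega⟩ with hi0
  set i1 : Fin n := ⟨1, by omega⟩ with hi1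
  set i2 : Fin n := ⟨2, by omega⟩ with hi2
  have h01 : i0 ≠ i1 := by simp [hi0, hi1, Fin.ext_iff]
  have h02 : i0 ≠ i2 := by simp [hi0, hi2, Fin.ext_iff]
  have h12 : i1 ≠ i2 := by simp [hi1, hi2, Fin.ext_iff]
  set U : Matrix (Fin n) (Fin n) ℂ := (hP'.eigenvectorUnitary : Matrix (Fin n) (Fin n) ℂ)
    with hUdef
  have hU : U ∈ Matrix.unitaryGroup (Fin n) ℂ := (hP'.eigenvectorUnitary).2
  set d : Fin n → ℝ := hP'.eigenvalues with hd
  set D : Matrix (Fin n) (Fin n) ℂ := diagonal (fun c => ((d c : ℝ) : ℂ)) with hD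
  have hUP : Uᴴ * P' * U = D := by
    have hspec : P' = U * D * star U := hP'.spectral_theorem
    have h1 : star U * U = 1 := (Matrix.mem_unitaryGroup_iff').mp hU
    calc Uᴴ * P' * U = star U * P' * U := rfl
      _ = star U * (U * D * star U) * U := by rw [← hspec]
      _ = (star U * U) * D * (star U * U) := by noncomm_ring
      _ = D := by rw [h1, one_mul, mul_one]
  obtain ⟨x, y, hxy, hmed⟩ := exists_median (d i0) (d i1) (d i2)
  have key : ∀ R : Matrix (Fin n) (Fin n) ℂ, (R * Uᴴ) * P' * (R * Uᴴ)ᴴ = R * D * Rᴴ := by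
    intro R
    rw [Matrix.conjTranspose_mul, Matrix.conjTranspose_conjTranspose, ← hUP]
    noncomm_ring
  have hUmem : Uᴴ ∈ Matrix.unitaryGroup (Fin n) ℂ := Unitary.star_mem hU
  rcases hmed with hm | hm | hm
  · -- median is d i1, rotate plane (i0, i2)
    refine ⟨rot3 i0 i2 x y * Uᴴ, mul_mem (rot3_mem h02 hxy) hUmem, d i1, ?_, ?_, ?_, ?_⟩
    · rw [key, rot3_conj_A h02, hm]
    · rw [key, rot3_conj_B x y d (Ne.symm h01) h12]
    · rw [key, rot3_conj_C1 x y d (Ne.symm h01) h12]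
    · rw [key, rot3_conj_C2 x y d (Ne.symm h01) h12]
  · -- median is d i0, rotate plane (i1, i2)
    refine ⟨rot3 i1 i2 x y * Uᴴ, mul_mem (rot3_mem h12 hxy) hUmem, d i0, ?_, ?_, ?_, ?_⟩
    · rw [key, rot3_conj_B x y d h01 h02]
    · rw [key, rot3_conj_A h12, hm]
    · rw [key, rot3_conj_C2 x y d h01 h02]
    · rw [key, rot3_conj_C1 x y d h01 h02]
  · -- median is d i2, rotate plane (i0, i1) then swap coordinates i1 and i2
    have hSxy : (0 : ℝ) ^ 2 + (1 : ℝ) ^ 2 = 1 := by norm_num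
    have hmemS : rot3 i1 i2 0 1 ∈ Matrix.unitaryGroup (Fin n) ℂ := rot3_mem h12 hSxy
    have hmemR : rot3 i0 i1 x y ∈ Matrix.unitaryGroup (Fin n) ℂ := rot3_mem h01 hxy
    have hrow0 : ∀ c, rot3 i1 i2 (0:ℝ) (1:ℝ) i0 c = if c = i0 then 1 else 0 := by
      intro c
      rw [rot3_orow h01 h02]
      by_cases hc : i0 = c
      · rw [if_pos hc, if_pos hc.symm]
      · rw [if_neg hc, if_neg (fun h => hc h.symm)]
    have hrow1 : ∀ c, rot3 i1 i2 (0:ℝ) (1:ℝ) i1 c = if c = i2 then 1 else 0 := by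
      intro c
      by_cases hc2 : c = i2
      · rw [hc2, if_pos rfl, rot3_ik h12]
        norm_num
      · rw [if_neg hc2]
        by_cases hc1 : c = i1
        · rw [hc1, rot3_ii]
          norm_num
        · rw [rot3_irow hc1 hc2]
    have hconj : rot3 i1 i2 (0:ℝ) (1:ℝ) * rot3 i0 i1 x y * D *
          (rot3 i1 i2 (0:ℝ) (1:ℝ) * rot3 i0 i1 x y)ᴴ
        = rot3 i1 i2 (0:ℝ) (1:ℝ) * (rot3 i0 i1 x y * D * (rot3 i0 i1 x y)ᴴ) *
          (rot3 i1 i2 (0:ℝ) (1:ℝ))ᴴ := by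
      rw [Matrix.conjTranspose_mul]
      noncomm_ring
    refine ⟨(rot3 i1 i2 0 1 * rot3 i0 i1 x y) * Uᴴ,
      mul_mem (mul_mem hmemS hmemR) hUmem, d i2, ?_, ?_, ?_, ?_⟩
    · rw [key, hconj, conj_basis_entry _ _ i0 i0 i0 i0 hrow0 hrow0, rot3_conj_A h01, hm]
    · rw [key, hconj, conj_basis_entry _ _ i1 i1 i2 i2 hrow1 hrow1,
        rot3_conj_B x y d (Ne.symm h02) (Ne.symm h12)]
    · rw [key, hconj, conj_basis_entry _ _ i0 i1 i0 i2 hrow0 hrow1,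
        rot3_conj_C1 x y d (Ne.symm h02) (Ne.symm h12)]
    · rw [key, hconj, conj_basis_entry _ _ i1 i0 i2 i0 hrow1 hrow0,
        rot3_conj_C2 x y d (Ne.symm h02) (Ne.symm h12)]
end
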